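/- arXiv:1804.01628 — 10 statements merged into one kernel-verified Lean document; each statement's English description precedes it below -/
import Mathlib

section
/- Let k ≥ 2 be an integer and let ξ1, ξ2, ξ3, ξ4 be real numbers with ξ1 + ξ2 + ξ3 + ξ4 = 0. Then Ω1(k) = ξ1ξ2 · [ − Σ_{i+j=2k−2} (ξ1^i + ξ2^i)(ξ1+ξ2)^j + Σ_{i+j=2k−2} ξ4^i (ξ2+ξ4)^j + Σ_{i+j=2k−2} ξ3^i (ξ2+ξ3)^j + Σ_{i+j=2k−1, i≥1, j≥1} (−1)^i ( ξ3^i Σ_{m+l=j−1} ξ4^m (ξ2+ξ4)^l − ξ4^j Σ_{m+l=i−1} ξ3^m (ξ2+ξ3)^l ) ]. -/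
/-!
Write `G(x, y; m) = ∑_{i+j=m} x^i y^j`, so that `(x - y) G(x, y; m) = x^(m+1) - y^(m+1)`.
With `n = 2k - 1`, every sum in the bracket collapses this way once it is multiplied by
`ξ1 ξ2`. In the double sum, each inner sum times `ξ2` is a difference of powers, and because
`n` is odd the `(i, j)` term becomes `(-ξ3)^i (ξ2+ξ4)^j + (ξ2+ξ3)^i (-ξ4)^j`; completing to the
full antidiagonal gives `G(-ξ3, ξ2+ξ4; n)` and `G(ξ2+ξ3, -ξ4; n)`, whose factors
`-ξ3 - (ξ2+ξ4)` and `ξ2+ξ3+ξ4` are `±ξ1`. Finally `(ξ1+ξ3)^(2k) = (ξ2+ξ4)^(2k)` and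
`(ξ1+ξ4)^(2k) = (ξ2+ξ3)^(2k)` because `ξ1+ξ2+ξ3+ξ4 = 0` and `2k` is even.
-/

open Finset

namespace Finset.Nat

theorem sub_mul_sum_antidiagonal_pow_mul_pow {R : Type*} [CommRing R] (x y : R) (n : ℕ) :
    (x - y) * ∑ p ∈ antidiagonal n, x ^ p.1 * y ^ p.2 = x ^ (n + 1) - y ^ (n + 1) := by
  rw [sum_antidiagonal_eq_sum_range_succ_mk, mul_comm]
  simpa using geom_sum₂_mul x y (n + 1)

theorem sum_filter_antidiagonal_pos_add {M : Type*} [AddCommMonoid M] {n : ℕ} (hn : 1 ≤ n)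
    (f : ℕ × ℕ → M) :
    ∑ p ∈ (antidiagonal n).filter (fun p => 1 ≤ p.1 ∧ 1 ≤ p.2), f p + (f (0, n) + f (n, 0))
      = ∑ p ∈ antidiagonal n, f p := by
  have hboundary : (antidiagonal n).filter (fun p => ¬(1 ≤ p.1 ∧ 1 ≤ p.2)) = {(0, n), (n, 0)} := by
    ext p
    simp only [mem_filter, HasAntidiagonal.mem_antidiagonal, mem_insert, mem_singleton, Prod.ext_iff]
    omega
  have hne : ((0, n) : ℕ × ℕ) ≠ (n, 0) := by
    simp only [ne_eq, Prod.ext_iff]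
    omega
  rw [← sum_pair hne, ← hboundary, sum_filter_add_sum_filter_not]

end Finset.Nat

open Finset.Nat

section

variable {R : Type*} [CommRing R]

theorem mul_neg_one_pow_mul_sub_of_odd (b x y : R) {i j : ℕ} (hi : 1 ≤ i) (hj : 1 ≤ j)
    (hodd : Odd (i + j)) :
    b * ((-1) ^ i * (x ^ i * ∑ q ∈ antidiagonal (j - 1), y ^ q.1 * (b + y) ^ q.2
        - y ^ j * ∑ q ∈ antidiagonal (i - 1), x ^ q.1 * (b + x) ^ q.2))
      = (-x) ^ i * (b + y) ^ j + (b + x) ^ i * (-y) ^ j := by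
  have hy := sub_mul_sum_antidiagonal_pow_mul_pow y (b + y) (j - 1)
  have hx := sub_mul_sum_antidiagonal_pow_mul_pow x (b + x) (i - 1)
  rw [Nat.sub_add_cancel hj] at hy
  rw [Nat.sub_add_cancel hi] at hx
  have hsign : (-1 : R) ^ j = -(-1) ^ i := by
    have hij : (-1 : R) ^ i * (-1) ^ j = -1 := by rw [← pow_add, hodd.neg_one_pow]
    have hii : (-1 : R) ^ i * (-1) ^ i = 1 := by rw [← mul_pow]; simp
    linear_combination (-1 : R) ^ i * hij - (-1 : R) ^ j * hii
  rw [neg_pow x, neg_pow y, hsign]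
  linear_combination (-(-1) ^ i * x ^ i) * hy + ((-1) ^ i * y ^ j) * hx

theorem mul_mul_sum_filter_antidiagonal_of_odd (a b x y : R) (hsum : a + b + x + y = 0) {n : ℕ}
    (hn : Odd n) :
    a * b * ∑ p ∈ (antidiagonal n).filter (fun p => 1 ≤ p.1 ∧ 1 ≤ p.2),
        (-1) ^ p.1 * (x ^ p.1 * ∑ q ∈ antidiagonal (p.2 - 1), y ^ q.1 * (b + y) ^ q.2
          - y ^ p.2 * ∑ q ∈ antidiagonal (p.1 - 1), x ^ q.1 * (b + x) ^ q.2)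
      = x ^ (n + 1) + y ^ (n + 1) - (b + y) ^ (n + 1) - (b + x) ^ (n + 1)
        + a * (x ^ n + y ^ n - (b + y) ^ n - (b + x) ^ n) := by
  have hterm : b * ∑ p ∈ (antidiagonal n).filter (fun p => 1 ≤ p.1 ∧ 1 ≤ p.2),
        (-1) ^ p.1 * (x ^ p.1 * ∑ q ∈ antidiagonal (p.2 - 1), y ^ q.1 * (b + y) ^ q.2
          - y ^ p.2 * ∑ q ∈ antidiagonal (p.1 - 1), x ^ q.1 * (b + x) ^ q.2)
      = ∑ p ∈ (antidiagonal n).filter (fun p => 1 ≤ p.1 ∧ 1 ≤ p.2),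
          ((-x) ^ p.1 * (b + y) ^ p.2 + (b + x) ^ p.1 * (-y) ^ p.2) := by
    rw [mul_sum]
    refine sum_congr rfl fun p hp => ?_
    obtain ⟨hp, hi, hj⟩ := mem_filter.mp hp
    rw [HasAntidiagonal.mem_antidiagonal] at hp
    exact mul_neg_one_pow_mul_sub_of_odd b x y hi hj (hp ▸ hn)
  have hsplit := sum_filter_antidiagonal_pos_add hn.pos
    fun p => (-x) ^ p.1 * (b + y) ^ p.2 + (b + x) ^ p.1 * (-y) ^ p.2
  simp only [sum_add_distrib] at hterm hsplit
  have h₁ := sub_mul_sum_antidiagonal_pow_mul_pow (-x) (b + y) n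
  have h₂ := sub_mul_sum_antidiagonal_pow_mul_pow (b + x) (-y) n
  simp only [pow_zero, one_mul, mul_one, hn.neg_pow, hn.add_one.neg_pow] at hsplit h₁ h₂
  linear_combination a * hterm + a * hsplit + h₁ - h₂
    + (∑ p ∈ antidiagonal n, (-x) ^ p.1 * (b + y) ^ p.2
      + ∑ p ∈ antidiagonal n, (b + x) ^ p.1 * (-y) ^ p.2) * hsum

end

/-- Identity (3.21): for an integer `k ≥ 2` and reals with `ξ1 + ξ2 + ξ3 + ξ4 = 0`,
`Ω1(k)` factors as `ξ1 ξ2` times the explicit expression of (3.21). -/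
theorem Omega1_div_xi1_xi2 (k : ℕ) (hk : 2 ≤ k) (ξ1 ξ2 ξ3 ξ4 : ℝ)
    (h : ξ1 + ξ2 + ξ3 + ξ4 = 0) :
    ξ1 ^ (2 * k) + ξ2 ^ (2 * k) + ξ3 ^ (2 * k) + ξ4 ^ (2 * k)
      - (ξ1 + ξ2) ^ (2 * k) - (ξ1 + ξ3) ^ (2 * k) - (ξ1 + ξ4) ^ (2 * k)
    = ξ1 * ξ2 *
      ( - ∑ p ∈ antidiagonal (2 * k - 2), (ξ1 ^ p.1 + ξ2 ^ p.1) * (ξ1 + ξ2) ^ p.2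
      + ∑ p ∈ antidiagonal (2 * k - 2), ξ4 ^ p.1 * (ξ2 + ξ4) ^ p.2
      + ∑ p ∈ antidiagonal (2 * k - 2), ξ3 ^ p.1 * (ξ2 + ξ3) ^ p.2
      + ∑ p ∈ (antidiagonal (2 * k - 1)).filter (fun p => 1 ≤ p.1 ∧ 1 ≤ p.2),
          (-1 : ℝ) ^ p.1 *
            ( ξ3 ^ p.1 * ∑ q ∈ antidiagonal (p.2 - 1), ξ4 ^ q.1 * (ξ2 + ξ4) ^ q.2
            - ξ4 ^ p.2 * ∑ q ∈ antidiagonal (p.1 - 1), ξ3 ^ q.1 * (ξ2 + ξ3) ^ q.2 ) ) := by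
  obtain ⟨n, hn⟩ : ∃ n, 2 * k = n + 1 := ⟨2 * k - 1, by omega⟩
  have hodd : Odd n := ⟨k - 1, by omega⟩
  rw [show 2 * k - 2 = n - 1 by omega, show 2 * k - 1 = n by omega, hn]
  have h₁ := sub_mul_sum_antidiagonal_pow_mul_pow ξ1 (ξ1 + ξ2) (n - 1)
  have h₂ := sub_mul_sum_antidiagonal_pow_mul_pow ξ2 (ξ1 + ξ2) (n - 1)
  have h₃ := sub_mul_sum_antidiagonal_pow_mul_pow ξ3 (ξ2 + ξ3) (n - 1)
  have h₄ := sub_mul_sum_antidiagonal_pow_mul_pow ξ4 (ξ2 + ξ4) (n - 1)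
  rw [Nat.sub_add_cancel hodd.pos] at h₁ h₂ h₃ h₄
  have hdouble := mul_mul_sum_filter_antidiagonal_of_odd ξ1 ξ2 ξ3 ξ4 h hodd
  rw [show ξ1 + ξ3 = -(ξ2 + ξ4) by linear_combination h,
    show ξ1 + ξ4 = -(ξ2 + ξ3) by linear_combination h, hodd.add_one.neg_pow, hodd.add_one.neg_pow]
  simp only [add_mul, sum_add_distrib]
  linear_combination -hdouble - ξ1 * h₁ - ξ2 * h₂ + ξ1 * h₃ + ξ1 * h₄
end

section
/- Let k ≥ 1 be an integer and let ξ1, ξ2, ξ3, ξ4 be real numbers with ξ1 + ξ2 + ξ3 + ξ4 = 0. Then Ω2(k) = (ξ1+ξ2)(ξ1+ξ3)(ξ1+ξ4) · Q, where Q := Σ_{i+j=2k−2} (−1)^i (2 ξ1^i ξ4^j + ξ2^i ξ3^j) + Σ_{i+j=2k−1, i≥1, j≥1} [ (−ξ3)^i Σ_{m+l=j−1} ξ1^m (−ξ4)^l + ξ4^j Σ_{m+l=i−1} (−ξ2)^m ξ3^l ] + Σ_{i+j=2k−2, j≥1} (−1)^i ( Σ_{n+h=i} ξ1^n (−ξ4)^h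 )( Σ_{m+l=j} ξ2^m (−ξ4)^l ) + Σ_{i+j=2k−2, j≥1} (−1)^{i+1} ξ4^{i+1} [ Σ_{m+l=j−1} ( ξ3^m (−ξ2)^l + ξ4^m (−ξ1)^l ) + Σ_{m+l=j, m≥1, l≥1} ( (−ξ1)^l Σ_{n+h=m−1} ξ3^n (−ξ2)^h + (−ξ2)^m Σ_{n+h=l−1} ξ4^n (−ξ1)^h ) ]. -/
open Finset Finset.Nat

private lemma geo (a b : ℝ) (n : ℕ) :
    (a - b) * ∑ p ∈ antidiagonal n, a ^ p.1 * b ^ p.2 = a ^ (n + 1) - b ^ (n + 1) := by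
  rw [Finset.Nat.sum_antidiagonal_eq_sum_range_succ_mk, mul_comm]
  simpa using geom_sum₂_mul a b (n + 1)

private lemma sswap (a b : ℝ) (n : ℕ) :
    ∑ p ∈ antidiagonal n, a ^ p.1 * b ^ p.2 = ∑ p ∈ antidiagonal n, b ^ p.1 * a ^ p.2 := by
  rw [← Finset.Nat.sum_antidiagonal_swap]
  exact Finset.sum_congr rfl fun p _ => by simp [Prod.swap, mul_comm]

private lemma alt (n : ℕ) : ∑ p ∈ antidiagonal (2 * n + 1), (-1 : ℝ) ^ p.1 = 0 := by
  rw [Finset.Nat.sum_antidiagonal_eq_sum_range_succ_mk, neg_one_geom_sum,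
    if_pos ⟨n + 1, by omega⟩]

private lemma shift1 (n : ℕ) (f : ℕ × ℕ → ℝ) :
    ∑ p ∈ (antidiagonal (n + 1)).filter (fun p => 1 ≤ p.2), f p
      = ∑ q ∈ antidiagonal n, f (q.1, q.2 + 1) := by
  rw [Finset.sum_filter, Finset.Nat.sum_antidiagonal_succ']
  simp

private lemma shift2 (n : ℕ) (f : ℕ × ℕ → ℝ) :
    ∑ p ∈ (antidiagonal (n + 2)).filter (fun p => 1 ≤ p.1 ∧ 1 ≤ p.2), f p
      = ∑ q ∈ antidiagonal n, f (q.1 + 1, q.2 + 1) := by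
  rw [Finset.sum_filter, Finset.Nat.sum_antidiagonal_succ']
  have : ∀ q ∈ antidiagonal (n+1), (if 1 ≤ q.1 ∧ 1 ≤ q.2 + 1 then f (q.1, q.2+1) else 0)
      = (fun p : ℕ × ℕ => if 1 ≤ p.1 then f (p.1, p.2 + 1) else 0) q := by
    intro q _; simp
  rw [Finset.sum_congr rfl this, Finset.Nat.sum_antidiagonal_succ]
  simp

private lemma filter_both (n : ℕ) (f : ℕ × ℕ → ℝ) :
    ∑ p ∈ (antidiagonal (n + 1)).filter (fun p => 1 ≤ p.1 ∧ 1 ≤ p.2), f p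
      = ∑ p ∈ antidiagonal (n + 1), f p - f (n + 1, 0) - f (0, n + 1) := by
  rw [Finset.sum_filter, Finset.Nat.sum_antidiagonal_succ', Finset.Nat.sum_antidiagonal_succ']
  simp only [Nat.le_refl, le_add_iff_nonneg_left, Nat.zero_le, and_true, Nat.lt_irrefl,
    not_le, Nat.lt_one_iff, if_neg (by omega : ¬(1 ≤ n + 1 ∧ 1 ≤ 0))]
  norm_num
  have key : ∑ q ∈ antidiagonal n, (f (q.1, q.2 + 1) - if 1 ≤ q.1 then f (q.1, q.2 + 1) else 0)
      = f (0, n + 1) := by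
    have e : ∀ q ∈ antidiagonal n,
        (f (q.1, q.2 + 1) - if 1 ≤ q.1 then f (q.1, q.2 + 1) else 0)
          = (if q = (0, n) then f (0, n + 1) else 0) := by
      intro q hq
      have hq' := Finset.HasAntidiagonal.mem_antidiagonal.mp hq
      by_cases h0 : q.1 = 0
      · have hqe : q = (0, n) := Prod.ext h0 (by omega)
        rw [if_pos hqe, if_neg (by omega), hqe]; simp
      · rw [if_pos (by omega), if_neg (fun hqe => h0 (by rw [hqe]))]; ring
    rw [Finset.sum_congr rfl e, Finset.sum_ite_eq' (antidiagonal n) ((0 : ℕ), n)]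
    rw [if_pos (by simp)]
  have hs := Finset.sum_sub_distrib (s := antidiagonal n)
    (f := fun q => f (q.1, q.2 + 1)) (g := fun q => if 1 ≤ q.1 then f (q.1, q.2 + 1) else 0)
  rw [key] at hs
  linarith [hs]

/-- Lemma 3.2: for an integer `k ≥ 1` and reals with `ξ1 + ξ2 + ξ3 + ξ4 = 0`, the quantity
`Ω2(k) = ξ1^{2k+1} + ξ2^{2k+1} + ξ3^{2k+1} + ξ4^{2k+1}` factors as
`(ξ1+ξ2)(ξ1+ξ3)(ξ1+ξ4) · Q` with the explicit polynomial `Q` of (3.40). -/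
theorem Omega2_factorization (k : ℕ) (hk : 1 ≤ k) (ξ1 ξ2 ξ3 ξ4 : ℝ)
    (h : ξ1 + ξ2 + ξ3 + ξ4 = 0) :
    ξ1 ^ (2 * k + 1) + ξ2 ^ (2 * k + 1) + ξ3 ^ (2 * k + 1) + ξ4 ^ (2 * k + 1)
    = (ξ1 + ξ2) * (ξ1 + ξ3) * (ξ1 + ξ4) *
      ( ∑ p ∈ antidiagonal (2 * k - 2),
          (-1 : ℝ) ^ p.1 * (2 * ξ1 ^ p.1 * ξ4 ^ p.2 + ξ2 ^ p.1 * ξ3 ^ p.2)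
      + ∑ p ∈ (antidiagonal (2 * k - 1)).filter (fun p => 1 ≤ p.1 ∧ 1 ≤ p.2),
          ( (-ξ3) ^ p.1 * ∑ q ∈ antidiagonal (p.2 - 1), ξ1 ^ q.1 * (-ξ4) ^ q.2
          + ξ4 ^ p.2 * ∑ q ∈ antidiagonal (p.1 - 1), (-ξ2) ^ q.1 * ξ3 ^ q.2 )
      + ∑ p ∈ (antidiagonal (2 * k - 2)).filter (fun p => 1 ≤ p.2),
          (-1 : ℝ) ^ p.1 *
            (∑ q ∈ antidiagonal p.1, ξ1 ^ q.1 * (-ξ4) ^ q.2) *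
            (∑ q ∈ antidiagonal p.2, ξ2 ^ q.1 * (-ξ4) ^ q.2)
      + ∑ p ∈ (antidiagonal (2 * k - 2)).filter (fun p => 1 ≤ p.2),
          (-1 : ℝ) ^ (p.1 + 1) * ξ4 ^ (p.1 + 1) *
            ( (∑ q ∈ antidiagonal (p.2 - 1),
                (ξ3 ^ q.1 * (-ξ2) ^ q.2 + ξ4 ^ q.1 * (-ξ1) ^ q.2))
            + ∑ q ∈ (antidiagonal p.2).filter (fun q => 1 ≤ q.1 ∧ 1 ≤ q.2),
                ( (-ξ1) ^ q.2 * ∑ r ∈ antidiagonal (q.1 - 1), ξ3 ^ r.1 * (-ξ2) ^ r.2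
                + (-ξ2) ^ q.1 * ∑ r ∈ antidiagonal (q.2 - 1), ξ4 ^ r.1 * (-ξ1) ^ r.2 ) ) ) := by
  rcases eq_or_lt_of_le hk with hk1 | hk2
  · -- k = 1
    subst hk1
    have e1 : (antidiagonal (2 * 1 - 1)).filter (fun p => 1 ≤ p.1 ∧ 1 ≤ p.2) = ∅ := by decide
    have e0 : (antidiagonal (2 * 1 - 2)).filter (fun p : ℕ × ℕ => 1 ≤ p.2) = ∅ := by decide
    rw [e1, e0]
    norm_num [show (2 * 1 - 2 : ℕ) = 0 from rfl]
    have hx : ξ1 = -(ξ2 + ξ3 + ξ4) := by linarith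
    subst hx
    ring
  · -- k ≥ 2
    obtain ⟨j, rfl⟩ : ∃ j, k = j + 2 := ⟨k - 2, by omega⟩
    rw [show 2 * (j + 2) - 2 = 2 * j + 2 from by omega,
        show 2 * (j + 2) - 1 = 2 * j + 3 from by omega,
        show 2 * (j + 2) + 1 = 2 * j + 5 from by omega]
    have hT1 : (ξ1 + ξ4) * (∑ p ∈ antidiagonal (2 * j + 2),
          (-1 : ℝ) ^ p.1 * (2 * ξ1 ^ p.1 * ξ4 ^ p.2 + ξ2 ^ p.1 * ξ3 ^ p.2))
        = 2 * (ξ1 ^ (2 * j + 3) + ξ4 ^ (2 * j + 3)) - ξ2 ^ (2 * j + 3) - ξ3 ^ (2 * j + 3) := by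
      have e : ∑ p ∈ antidiagonal (2 * j + 2),
            (-1 : ℝ) ^ p.1 * (2 * ξ1 ^ p.1 * ξ4 ^ p.2 + ξ2 ^ p.1 * ξ3 ^ p.2)
          = 2 * (∑ p ∈ antidiagonal (2 * j + 2), (-ξ1) ^ p.1 * ξ4 ^ p.2)
            + ∑ p ∈ antidiagonal (2 * j + 2), (-ξ2) ^ p.1 * ξ3 ^ p.2 := by
        rw [Finset.mul_sum, ← Finset.sum_add_distrib]
        exact Finset.sum_congr rfl fun p _ => by rw [neg_pow, neg_pow]; ring
      have g1 := geo (-ξ1) ξ4 (2 * j + 2)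
      have g2 := geo (-ξ2) ξ3 (2 * j + 2)
      have o : Odd (2 * j + 2 + 1) := ⟨j + 1, by omega⟩
      rw [Odd.neg_pow o] at g1 g2
      linear_combination (ξ1 + ξ4) * e - 2 * g1 + g2
        + (∑ p ∈ antidiagonal (2 * j + 2), (-ξ2) ^ p.1 * ξ3 ^ p.2) * h
    have hT2 : (ξ1 + ξ3) * ((ξ1 + ξ4) * ∑ p ∈ (antidiagonal (2 * j + 3)).filter (fun p => 1 ≤ p.1 ∧ 1 ≤ p.2),
        ( (-ξ3) ^ p.1 * ∑ q ∈ antidiagonal (p.2 - 1), ξ1 ^ q.1 * (-ξ4) ^ q.2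
        + ξ4 ^ p.2 * ∑ q ∈ antidiagonal (p.1 - 1), (-ξ2) ^ q.1 * ξ3 ^ q.2 ))
    = -(ξ1 * ξ3 * (ξ1 ^ (2 * j + 2) - ξ3 ^ (2 * j + 2)))
      - ξ2 * ξ4 * (ξ2 ^ (2 * j + 2) - ξ4 ^ (2 * j + 2)) := by
        rw [show (2 * j + 3) = 2 * j + 1 + 2 from rfl, shift2]
        simp only [Nat.add_sub_cancel]
        rw [Finset.mul_sum]
        have key : ∀ q ∈ antidiagonal (2 * j + 1),
            (ξ1 + ξ4) * ((-ξ3) ^ (q.1 + 1) * (∑ r ∈ antidiagonal q.2, ξ1 ^ r.1 * (-ξ4) ^ r.2)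
              + ξ4 ^ (q.2 + 1) * ∑ r ∈ antidiagonal q.1, (-ξ2) ^ r.1 * ξ3 ^ r.2)
            = (-ξ3) * ξ1 * ((-ξ3) ^ q.1 * ξ1 ^ q.2) + (-ξ2) * ξ4 * ((-ξ2) ^ q.1 * ξ4 ^ q.2) := by
          intro q hq
          have hq' : q.1 + q.2 = 2 * j + 1 := Finset.HasAntidiagonal.mem_antidiagonal.mp hq
          have g1 := geo ξ1 (-ξ4) q.2
          have g2 := geo (-ξ2) ξ3 q.1
          have s1 : (-ξ3) ^ (q.1 + 1) * (-ξ4) ^ (q.2 + 1) = -(ξ3 ^ (q.1 + 1) * ξ4 ^ (q.2 + 1)) := by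
            calc (-ξ3) ^ (q.1 + 1) * (-ξ4) ^ (q.2 + 1)
                = (-1 : ℝ) ^ ((q.1 + 1) + (q.2 + 1)) * (ξ3 ^ (q.1 + 1) * ξ4 ^ (q.2 + 1)) := by
                  rw [neg_pow, neg_pow, pow_add]; ring
              _ = -(ξ3 ^ (q.1 + 1) * ξ4 ^ (q.2 + 1)) := by
                  rw [show (q.1 + 1) + (q.2 + 1) = 2 * (j + 1) + 1 from by omega,
                    Odd.neg_one_pow ⟨j + 1, by omega⟩]; ring
          linear_combination ((-ξ3) ^ (q.1 + 1)) * g1 + (ξ4 ^ (q.2 + 1)) * g2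
            + (ξ4 ^ (q.2 + 1) * (∑ r ∈ antidiagonal q.1, (-ξ2) ^ r.1 * ξ3 ^ r.2)) * h - s1
        rw [Finset.sum_congr rfl key, Finset.sum_add_distrib, ← Finset.mul_sum, ← Finset.mul_sum]
        have g1 := geo (-ξ3) ξ1 (2 * j + 1)
        have g2 := geo (-ξ2) ξ4 (2 * j + 1)
        have ev : Even (2 * j + 1 + 1) := ⟨j + 1, by omega⟩
        rw [Even.neg_pow ev] at g1 g2
        linear_combination (ξ1 * ξ3) * g1 - (ξ2 * ξ4) * g2
          - (ξ2 * ξ4 * (∑ p ∈ antidiagonal (2 * j + 1), (-ξ2) ^ p.1 * ξ4 ^ p.2)) * h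
    have hT3 : (ξ1 + ξ3) * ((ξ1 + ξ4) * ∑ p ∈ (antidiagonal (2 * j + 2)).filter (fun p => 1 ≤ p.2),
        (-1 : ℝ) ^ p.1 *
          (∑ q ∈ antidiagonal p.1, ξ1 ^ q.1 * (-ξ4) ^ q.2) *
          (∑ q ∈ antidiagonal p.2, ξ2 ^ q.1 * (-ξ4) ^ q.2))
    = (-ξ1) * ξ2 ^ 2 * (∑ p ∈ antidiagonal (2 * j + 1), (-ξ1) ^ p.1 * ξ2 ^ p.2)
      - ξ1 * ξ4 ^ 2 * (∑ p ∈ antidiagonal (2 * j + 1), ξ1 ^ p.1 * ξ4 ^ p.2)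
      - ξ2 ^ 2 * ξ4 * (∑ p ∈ antidiagonal (2 * j + 1), ξ4 ^ p.1 * ξ2 ^ p.2) := by
        rw [show (2 * j + 2) = 2 * j + 1 + 1 from rfl, shift1]
        rw [Finset.mul_sum, Finset.mul_sum]
        have key : ∀ q ∈ antidiagonal (2 * j + 1),
            (ξ1 + ξ3) * ((ξ1 + ξ4) * ((-1 : ℝ) ^ q.1 *
                (∑ r ∈ antidiagonal q.1, ξ1 ^ r.1 * (-ξ4) ^ r.2) *
                (∑ r ∈ antidiagonal (q.2 + 1), ξ2 ^ r.1 * (-ξ4) ^ r.2)))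
            = (-ξ1) * ξ2 ^ 2 * ((-ξ1) ^ q.1 * ξ2 ^ q.2)
              + (-(ξ1 * ξ4 ^ 2)) * (ξ1 ^ q.1 * ξ4 ^ q.2)
              + (-(ξ2 ^ 2 * ξ4)) * (ξ4 ^ q.1 * ξ2 ^ q.2)
              + (-(ξ4 ^ (2 * j + 4))) * (-1 : ℝ) ^ q.1 := by
          intro q hq
          have hq' : q.1 + q.2 = 2 * j + 1 := Finset.HasAntidiagonal.mem_antidiagonal.mp hq
          have c1 : (ξ1 + ξ4) * (∑ r ∈ antidiagonal q.1, ξ1 ^ r.1 * (-ξ4) ^ r.2)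
              = ξ1 ^ (q.1 + 1) - (-ξ4) ^ (q.1 + 1) := by
            linear_combination geo ξ1 (-ξ4) q.1
          have c2 : (ξ1 + ξ3) * (∑ r ∈ antidiagonal (q.2 + 1), ξ2 ^ r.1 * (-ξ4) ^ r.2)
              = -(ξ2 ^ (q.2 + 2)) + (-ξ4) ^ (q.2 + 2) := by
            linear_combination -(geo ξ2 (-ξ4) (q.2 + 1))
              + (∑ r ∈ antidiagonal (q.2 + 1), ξ2 ^ r.1 * (-ξ4) ^ r.2) * h
          have s1 : (-1 : ℝ) ^ q.1 * (-1 : ℝ) ^ q.2 = -1 := by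
            rw [← pow_add, hq', Odd.neg_one_pow ⟨j, by omega⟩]
          have s2 : (-1 : ℝ) ^ q.1 * (-1 : ℝ) ^ q.1 = 1 := by
            rw [← pow_add, Even.neg_one_pow ⟨q.1, rfl⟩]
          have n1 : (-ξ4 : ℝ) ^ (q.1 + 1) = (-1 : ℝ) ^ q.1 * (-(ξ4 ^ (q.1 + 1))) := by
            rw [neg_pow, pow_add]; ring
          have n2 : (-ξ4 : ℝ) ^ (q.2 + 2) = (-1 : ℝ) ^ q.2 * ξ4 ^ (q.2 + 2) := by
            rw [neg_pow, pow_add]; ring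
          have n3 : (-ξ1 : ℝ) ^ q.1 = (-1 : ℝ) ^ q.1 * ξ1 ^ q.1 := by rw [neg_pow]
          have n4 : ξ4 ^ (q.1 + 1) * ξ4 ^ (q.2 + 2) = ξ4 ^ (2 * j + 4) := by
            rw [← pow_add]; congr 1; omega
          calc (ξ1 + ξ3) * ((ξ1 + ξ4) * ((-1 : ℝ) ^ q.1 *
                (∑ r ∈ antidiagonal q.1, ξ1 ^ r.1 * (-ξ4) ^ r.2) *
                (∑ r ∈ antidiagonal (q.2 + 1), ξ2 ^ r.1 * (-ξ4) ^ r.2)))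
              = (-1 : ℝ) ^ q.1 * (((ξ1 + ξ4) * (∑ r ∈ antidiagonal q.1, ξ1 ^ r.1 * (-ξ4) ^ r.2))
                  * ((ξ1 + ξ3) * (∑ r ∈ antidiagonal (q.2 + 1), ξ2 ^ r.1 * (-ξ4) ^ r.2))) := by ring
            _ = (-1 : ℝ) ^ q.1 * ((ξ1 ^ (q.1 + 1) - (-ξ4) ^ (q.1 + 1))
                  * (-(ξ2 ^ (q.2 + 2)) + (-ξ4) ^ (q.2 + 2))) := by rw [c1, c2]
            _ = _ := by
                rw [n1, n2, n3]
                linear_combination (ξ1 ^ (q.1 + 1) * ξ4 ^ (q.2 + 2)) * s1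
                  + (ξ2 ^ (q.2 + 2) * ξ4 ^ (q.1 + 1) - (-1 : ℝ) ^ q.2 * ξ4 ^ (q.1 + 1) * ξ4 ^ (q.2 + 2)) * s2
                  + ((-1 : ℝ) ^ q.1 * (-1 : ℝ) ^ q.1 * (-1 : ℝ) ^ q.2) * n4
                  + (-2 * ξ4 ^ (q.1 + 1) * ξ2 ^ (q.2 + 2)
                     + ξ4 ^ (q.1 + 1) * ξ4 ^ (q.2 + 2) * (-1 : ℝ) ^ q.2) * s2
                  + (ξ4 ^ (2 * j + 4) * (-1 : ℝ) ^ q.1) * s1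
        rw [Finset.sum_congr rfl key, Finset.sum_add_distrib, Finset.sum_add_distrib,
          Finset.sum_add_distrib, ← Finset.mul_sum, ← Finset.mul_sum, ← Finset.mul_sum,
          ← Finset.mul_sum, alt j]
        ring
    have hT4 : (ξ1 + ξ3) * ((ξ1 + ξ4) * ∑ p ∈ (antidiagonal (2 * j + 2)).filter (fun p => 1 ≤ p.2),
        (-1 : ℝ) ^ (p.1 + 1) * ξ4 ^ (p.1 + 1) *
          ( (∑ q ∈ antidiagonal (p.2 - 1),
              (ξ3 ^ q.1 * (-ξ2) ^ q.2 + ξ4 ^ q.1 * (-ξ1) ^ q.2))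
          + ∑ q ∈ (antidiagonal p.2).filter (fun q => 1 ≤ q.1 ∧ 1 ≤ q.2),
              ( (-ξ1) ^ q.2 * ∑ r ∈ antidiagonal (q.1 - 1), ξ3 ^ r.1 * (-ξ2) ^ r.2
              + (-ξ2) ^ q.1 * ∑ r ∈ antidiagonal (q.2 - 1), ξ4 ^ r.1 * (-ξ1) ^ r.2 ) ))
    = ξ3 ^ 2 * ξ4 * (∑ p ∈ antidiagonal (2 * j + 1), (-ξ4) ^ p.1 * ξ3 ^ p.2)
      + ξ1 ^ 2 * ξ4 * (∑ p ∈ antidiagonal (2 * j + 1), ξ4 ^ p.1 * ξ1 ^ p.2)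
      + ξ2 ^ 2 * ξ4 * (∑ p ∈ antidiagonal (2 * j + 1), ξ4 ^ p.1 * ξ2 ^ p.2) := by
        rw [show (2 * j + 2) = 2 * j + 1 + 1 from rfl, shift1]
        simp only [Nat.add_sub_cancel]
        rw [Finset.mul_sum, Finset.mul_sum]
        have key : ∀ q ∈ antidiagonal (2 * j + 1),
            (ξ1 + ξ3) * ((ξ1 + ξ4) * ((-1 : ℝ) ^ (q.1 + 1) * ξ4 ^ (q.1 + 1) *
              ( (∑ r ∈ antidiagonal q.2, (ξ3 ^ r.1 * (-ξ2) ^ r.2 + ξ4 ^ r.1 * (-ξ1) ^ r.2))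
              + ∑ s ∈ (antidiagonal (q.2 + 1)).filter (fun s => 1 ≤ s.1 ∧ 1 ≤ s.2),
                  ( (-ξ1) ^ s.2 * ∑ r ∈ antidiagonal (s.1 - 1), ξ3 ^ r.1 * (-ξ2) ^ r.2
                  + (-ξ2) ^ s.1 * ∑ r ∈ antidiagonal (s.2 - 1), ξ4 ^ r.1 * (-ξ1) ^ r.2 ) )))
            = ξ3 ^ 2 * ξ4 * ((-ξ4) ^ q.1 * ξ3 ^ q.2)
              + ξ1 ^ 2 * ξ4 * (ξ4 ^ q.1 * ξ1 ^ q.2)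
              + ξ2 ^ 2 * ξ4 * (ξ4 ^ q.1 * ξ2 ^ q.2)
              + ξ4 ^ (2 * j + 4) * (-1 : ℝ) ^ q.1 := by
          intro q hq
          have hq' : q.1 + q.2 = 2 * j + 1 := Finset.HasAntidiagonal.mem_antidiagonal.mp hq
          have hU : (ξ1 + ξ4) * (∑ r ∈ antidiagonal q.2, (ξ3 ^ r.1 * (-ξ2) ^ r.2 + ξ4 ^ r.1 * (-ξ1) ^ r.2))
              = -(ξ3 ^ (q.2 + 1)) + (-ξ2) ^ (q.2 + 1) + ξ4 ^ (q.2 + 1) - (-ξ1) ^ (q.2 + 1) := by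
            rw [Finset.sum_add_distrib]
            linear_combination -(geo ξ3 (-ξ2) q.2) + geo ξ4 (-ξ1) q.2
              + (∑ r ∈ antidiagonal q.2, ξ3 ^ r.1 * (-ξ2) ^ r.2) * h
          have keyV : ∀ s ∈ (antidiagonal (q.2 + 1)).filter (fun s => 1 ≤ s.1 ∧ 1 ≤ s.2),
              (ξ1 + ξ4) * ( (-ξ1) ^ s.2 * ∑ r ∈ antidiagonal (s.1 - 1), ξ3 ^ r.1 * (-ξ2) ^ r.2
                  + (-ξ2) ^ s.1 * ∑ r ∈ antidiagonal (s.2 - 1), ξ4 ^ r.1 * (-ξ1) ^ r.2 )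
              = -(ξ3 ^ s.1 * (-ξ1) ^ s.2) + (-ξ2) ^ s.1 * ξ4 ^ s.2 := by
            intro s hs
            have hs12 := (Finset.mem_filter.mp hs).2
            have e1 : s.1 - 1 + 1 = s.1 := by omega
            have e2 : s.2 - 1 + 1 = s.2 := by omega
            have gA := geo ξ3 (-ξ2) (s.1 - 1); rw [e1] at gA
            have gB := geo ξ4 (-ξ1) (s.2 - 1); rw [e2] at gB
            linear_combination (-((-ξ1) ^ s.2)) * gA + ((-ξ2) ^ s.1) * gB
              + ((-ξ1) ^ s.2 * (∑ r ∈ antidiagonal (s.1 - 1), ξ3 ^ r.1 * (-ξ2) ^ r.2)) * h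
          have hV : (ξ1 + ξ4) * (∑ s ∈ (antidiagonal (q.2 + 1)).filter (fun s => 1 ≤ s.1 ∧ 1 ≤ s.2),
                ( (-ξ1) ^ s.2 * ∑ r ∈ antidiagonal (s.1 - 1), ξ3 ^ r.1 * (-ξ2) ^ r.2
                + (-ξ2) ^ s.1 * ∑ r ∈ antidiagonal (s.2 - 1), ξ4 ^ r.1 * (-ξ1) ^ r.2 ))
              = (-(∑ s ∈ antidiagonal (q.2 + 1), ξ3 ^ s.1 * (-ξ1) ^ s.2))
                + (∑ s ∈ antidiagonal (q.2 + 1), (-ξ2) ^ s.1 * ξ4 ^ s.2)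
                - (-(ξ3 ^ (q.2 + 1)) + (-ξ2) ^ (q.2 + 1))
                - (-((-ξ1) ^ (q.2 + 1)) + ξ4 ^ (q.2 + 1)) := by
            rw [Finset.mul_sum, Finset.sum_congr rfl keyV, filter_both q.2
              (fun s => -(ξ3 ^ s.1 * (-ξ1) ^ s.2) + (-ξ2) ^ s.1 * ξ4 ^ s.2)]
            rw [Finset.sum_add_distrib]
            simp only [Finset.sum_neg_distrib]
            norm_num
          have cW1 : (ξ1 + ξ3) * (∑ s ∈ antidiagonal (q.2 + 1), ξ3 ^ s.1 * (-ξ1) ^ s.2)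
              = ξ3 ^ (q.2 + 2) - (-ξ1) ^ (q.2 + 2) := by
            linear_combination geo ξ3 (-ξ1) (q.2 + 1)
          have cW2 : (ξ1 + ξ3) * (∑ s ∈ antidiagonal (q.2 + 1), (-ξ2) ^ s.1 * ξ4 ^ s.2)
              = (-ξ2) ^ (q.2 + 2) - ξ4 ^ (q.2 + 2) := by
            linear_combination geo (-ξ2) ξ4 (q.2 + 1)
              + (∑ s ∈ antidiagonal (q.2 + 1), (-ξ2) ^ s.1 * ξ4 ^ s.2) * h
          have s1 : (-1 : ℝ) ^ q.1 * (-1 : ℝ) ^ q.2 = -1 := by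
            rw [← pow_add, hq', Odd.neg_one_pow ⟨j, by omega⟩]
          have s2 : (-1 : ℝ) ^ q.1 * (-1 : ℝ) ^ q.1 = 1 := by
            rw [← pow_add, Even.neg_one_pow ⟨q.1, rfl⟩]
          have n1 : (-ξ4 : ℝ) ^ q.1 = (-1 : ℝ) ^ q.1 * ξ4 ^ q.1 := by rw [neg_pow]
          have n2 : (-ξ1 : ℝ) ^ (q.2 + 2) = (-1 : ℝ) ^ q.2 * ξ1 ^ (q.2 + 2) := by
            rw [neg_pow, pow_add]; ring
          have n3 : (-ξ2 : ℝ) ^ (q.2 + 2) = (-1 : ℝ) ^ q.2 * ξ2 ^ (q.2 + 2) := by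
            rw [neg_pow, pow_add]; ring
          have n4 : ξ4 ^ (q.1 + 1) * ξ4 ^ (q.2 + 2) = ξ4 ^ (2 * j + 4) := by
            rw [← pow_add]; congr 1; omega
          linear_combination ((-1 : ℝ) ^ (q.1 + 1) * ξ4 ^ (q.1 + 1) * (ξ1 + ξ3)) * hU
            + ((-1 : ℝ) ^ (q.1 + 1) * ξ4 ^ (q.1 + 1) * (ξ1 + ξ3)) * hV
            + ((-1 : ℝ) ^ q.1 * ξ4 ^ (q.1 + 1)) * cW1
            + ((-1 : ℝ) ^ (q.1 + 1) * ξ4 ^ (q.1 + 1)) * cW2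
            + (-(ξ1 ^ 2 * ξ1 ^ q.2 * ξ4 * ξ4 ^ q.1) - ξ4 * ξ4 ^ q.1 * ξ2 ^ 2 * ξ2 ^ q.2) * s1
            + ((-1 : ℝ) ^ q.1) * n4
        rw [Finset.sum_congr rfl key, Finset.sum_add_distrib, Finset.sum_add_distrib,
          Finset.sum_add_distrib, ← Finset.mul_sum, ← Finset.mul_sum, ← Finset.mul_sum,
          ← Finset.mul_sum, alt j]
        ring
    have cSA : (ξ1 + ξ2) * (∑ p ∈ antidiagonal (2 * j + 1), (-ξ1) ^ p.1 * ξ2 ^ p.2)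
        = -(ξ1 ^ (2 * j + 2)) + ξ2 ^ (2 * j + 2) := by
      have g := geo (-ξ1) ξ2 (2 * j + 1)
      rw [Even.neg_pow ⟨j + 1, by omega⟩] at g
      linear_combination -g
    have cSC : (ξ1 + ξ2) * (∑ p ∈ antidiagonal (2 * j + 1), (-ξ4) ^ p.1 * ξ3 ^ p.2)
        = ξ4 ^ (2 * j + 2) - ξ3 ^ (2 * j + 2) := by
      have g := geo (-ξ4) ξ3 (2 * j + 1)
      rw [Even.neg_pow ⟨j + 1, by omega⟩] at g
      linear_combination g + (∑ p ∈ antidiagonal (2 * j + 1), (-ξ4) ^ p.1 * ξ3 ^ p.2) * h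
    have csw := sswap ξ4 ξ1 (2 * j + 1)
    have cg := geo ξ1 ξ4 (2 * j + 1)
    linear_combination (-((ξ1 + ξ2) * (ξ1 + ξ3))) * hT1 - (ξ1 + ξ2) * hT2
      - (ξ1 + ξ2) * hT3 - (ξ1 + ξ2) * hT4
      - ((ξ1 + ξ2) * ξ1 ^ 2 * ξ4) * csw - ((ξ1 + ξ2) * ξ1 * ξ4) * cg
      + (ξ1 * ξ2 ^ 2) * cSA - (ξ3 ^ 2 * ξ4) * cSC
      + (ξ4 ^ (2 * j + 4) - ξ3 * ξ4 ^ (2 * j + 3) + ξ3 ^ (2 * j + 4)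
         - ξ2 * ξ4 ^ (2 * j + 3) + ξ2 ^ (2 * j + 4) - ξ1 * ξ4 ^ (2 * j + 3)
         + ξ1 * ξ2 ^ (2 * j + 3) - ξ1 ^ (2 * j + 3) * ξ2 - ξ1 ^ (2 * j + 4)) * h
end

section
/- Let k ≥ 1 be an integer and let ξ1, ξ2, ξ3, ξ4 be real numbers with ξ1 + ξ2 + ξ3 + ξ4 = 0. Then Ω2(k) = (ξ1+ξ2)(ξ1+ξ3) · [ Σ_{i+j=2k−2} (−1)^i ( ξ1^{i+1} Σ_{m+l=j} ξ2^m (−ξ4)^l + ξ4^{i+1} Σ_{m+l=j} ξ3^m (−ξ1)^l ) + Σ_{i+j=2k−1} (−1)^i ( ξ3^i ξ1^j − ξ4^i ξ2^j ) ]. -/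
open Finset

private lemma S_mul (x y : ℝ) (n : ℕ) :
    (x - y) * ∑ p ∈ antidiagonal n, x ^ p.1 * y ^ p.2 = x ^ (n+1) - y ^ (n+1) := by
  rw [Finset.Nat.sum_antidiagonal_eq_sum_range_succ_mk, mul_comm]
  simpa using geom_sum₂_mul x y (n+1)

private lemma S_symm (x y : ℝ) (n : ℕ) :
    ∑ p ∈ antidiagonal n, x ^ p.1 * y ^ p.2 = ∑ p ∈ antidiagonal n, y ^ p.1 * x ^ p.2 := by
  rw [← Finset.Nat.sum_antidiagonal_swap]
  simp [mul_comm]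

private lemma S_double (x y z : ℝ) (n : ℕ) :
    (y - z) * ∑ p ∈ antidiagonal n, x ^ p.1 * (∑ q ∈ antidiagonal p.2, y ^ q.1 * z ^ q.2)
    = y * (∑ p ∈ antidiagonal n, x ^ p.1 * y ^ p.2)
      - z * (∑ p ∈ antidiagonal n, x ^ p.1 * z ^ p.2) := by
  rw [mul_sum, mul_sum, mul_sum, ← Finset.sum_sub_distrib]
  refine Finset.sum_congr rfl fun p hp => ?_
  have := S_mul y z p.2
  have hp2 : p.2 + 1 = p.2 + 1 := rfl
  calc (y - z) * (x ^ p.1 * ∑ q ∈ antidiagonal p.2, y ^ q.1 * z ^ q.2)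
      = x ^ p.1 * ((y - z) * ∑ q ∈ antidiagonal p.2, y ^ q.1 * z ^ q.2) := by ring
    _ = x ^ p.1 * (y ^ (p.2+1) - z ^ (p.2+1)) := by rw [S_mul]
    _ = y * (x ^ p.1 * y ^ p.2) - z * (x ^ p.1 * z ^ p.2) := by
        rw [pow_succ, pow_succ]; ring

/-- Identity (3.49): for `k ≥ 1` and reals with `ξ1 + ξ2 + ξ3 + ξ4 = 0`,
`Ω2(k)` factors as `(ξ1+ξ2)(ξ1+ξ3)` times the explicit expression of (3.49). -/
theorem Omega2_div_two_factors (k : ℕ) (hk : 1 ≤ k) (ξ1 ξ2 ξ3 ξ4 : ℝ)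
    (h : ξ1 + ξ2 + ξ3 + ξ4 = 0) :
    ξ1 ^ (2 * k + 1) + ξ2 ^ (2 * k + 1) + ξ3 ^ (2 * k + 1) + ξ4 ^ (2 * k + 1)
    = (ξ1 + ξ2) * (ξ1 + ξ3) *
      ( ∑ p ∈ antidiagonal (2 * k - 2),
          (-1 : ℝ) ^ p.1 *
            ( ξ1 ^ (p.1 + 1) * ∑ q ∈ antidiagonal p.2, ξ2 ^ q.1 * (-ξ4) ^ q.2
            + ξ4 ^ (p.1 + 1) * ∑ q ∈ antidiagonal p.2, ξ3 ^ q.1 * (-ξ1) ^ q.2 )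
      + ∑ p ∈ antidiagonal (2 * k - 1),
          (-1 : ℝ) ^ p.1 * (ξ3 ^ p.1 * ξ1 ^ p.2 - ξ4 ^ p.1 * ξ2 ^ p.2) ) := by
  obtain ⟨n, rfl⟩ : ∃ n, k = n + 1 := ⟨k - 1, (Nat.succ_pred_eq_of_pos hk).symm⟩
  have e2 : 2 * (n + 1) - 2 = 2 * n := by omega
  have e1 : 2 * (n + 1) - 1 = 2 * n + 1 := by omega
  have e3 : 2 * (n + 1) + 1 = 2 * n + 3 := by omega
  rw [e1, e2, e3]
  -- rewrite first big sum
  have hsum1 : ∑ p ∈ antidiagonal (2 * n),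
      (-1 : ℝ) ^ p.1 *
        ( ξ1 ^ (p.1 + 1) * ∑ q ∈ antidiagonal p.2, ξ2 ^ q.1 * (-ξ4) ^ q.2
        + ξ4 ^ (p.1 + 1) * ∑ q ∈ antidiagonal p.2, ξ3 ^ q.1 * (-ξ1) ^ q.2 )
      = ξ1 * (∑ p ∈ antidiagonal (2 * n), (-ξ1) ^ p.1 *
              (∑ q ∈ antidiagonal p.2, ξ2 ^ q.1 * (-ξ4) ^ q.2))
      + ξ4 * (∑ p ∈ antidiagonal (2 * n), (-ξ4) ^ p.1 *
              (∑ q ∈ antidiagonal p.2, ξ3 ^ q.1 * (-ξ1) ^ q.2)) := by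
    rw [mul_sum, mul_sum, ← Finset.sum_add_distrib]
    refine Finset.sum_congr rfl fun p hp => ?_
    rw [neg_pow ξ1 p.1, neg_pow ξ4 p.1, pow_succ]
    ring
  have hsum2 : ∑ p ∈ antidiagonal (2 * n + 1),
      (-1 : ℝ) ^ p.1 * (ξ3 ^ p.1 * ξ1 ^ p.2 - ξ4 ^ p.1 * ξ2 ^ p.2)
      = (∑ p ∈ antidiagonal (2 * n + 1), (-ξ3) ^ p.1 * ξ1 ^ p.2)
      - (∑ p ∈ antidiagonal (2 * n + 1), (-ξ4) ^ p.1 * ξ2 ^ p.2) := by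
    rw [← Finset.sum_sub_distrib]
    refine Finset.sum_congr rfl fun p hp => ?_
    rw [neg_pow ξ3 p.1, neg_pow ξ4 p.1]
    ring
  rw [hsum1, hsum2]
  have hP := S_double (-ξ1) ξ2 (-ξ4) (2 * n)
  have hQ := S_double (-ξ4) ξ3 (-ξ1) (2 * n)
  have hsym := S_symm (-ξ1) (-ξ4) (2 * n)
  have h1 := S_mul (-ξ1) ξ2 (2 * n)
  have h2 := S_mul (-ξ4) ξ3 (2 * n)
  have h3 := S_mul (-ξ3) ξ1 (2 * n + 1)
  have h4 := S_mul (-ξ4) ξ2 (2 * n + 1)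
  have hodd : Odd (2 * n + 1) := ⟨n, by ring⟩
  have heven : Even (2 * n + 2) := ⟨n + 1, by ring⟩
  rw [Odd.neg_pow hodd] at h1 h2
  rw [Even.neg_pow heven] at h3 h4
  -- now pure algebra: treat the sums as atoms
  set P := ∑ p ∈ antidiagonal (2 * n), (-ξ1) ^ p.1 *
      (∑ q ∈ antidiagonal p.2, ξ2 ^ q.1 * (-ξ4) ^ q.2) with hPdef
  set Q := ∑ p ∈ antidiagonal (2 * n), (-ξ4) ^ p.1 *
      (∑ q ∈ antidiagonal p.2, ξ3 ^ q.1 * (-ξ1) ^ q.2) with hQdef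
  set S12 := ∑ p ∈ antidiagonal (2 * n), (-ξ1) ^ p.1 * ξ2 ^ p.2 with hS12
  set S14 := ∑ p ∈ antidiagonal (2 * n), (-ξ1) ^ p.1 * (-ξ4) ^ p.2 with hS14
  set S43 := ∑ p ∈ antidiagonal (2 * n), (-ξ4) ^ p.1 * ξ3 ^ p.2 with hS43
  set S41 := ∑ p ∈ antidiagonal (2 * n), (-ξ4) ^ p.1 * (-ξ1) ^ p.2 with hS41
  set T31 := ∑ p ∈ antidiagonal (2 * n + 1), (-ξ3) ^ p.1 * ξ1 ^ p.2 with hT31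
  set T42 := ∑ p ∈ antidiagonal (2 * n + 1), (-ξ4) ^ p.1 * ξ2 ^ p.2 with hT42
  -- derived facts
  -- hP : (ξ2 - -ξ4) * P = ξ2 * S12 - (-ξ4) * S14
  -- hQ : (ξ3 - -ξ1) * Q = ξ3 * S43 - (-ξ1) * S41
  -- hsym : S14 = S41
  -- h1 : (-ξ1 - ξ2) * S12 = -ξ1^(2n+1) - ξ2^(2n+1)
  -- h2 : (-ξ4 - ξ3) * S43 = -ξ4^(2n+1) - ξ3^(2n+1)
  -- h3 : (-ξ3 - ξ1) * T31 = ξ3^(2n+2) - ξ1^(2n+2)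
  -- h4 : (-ξ4 - ξ2) * T42 = ξ4^(2n+2) - ξ2^(2n+2)
  have key : (ξ1 + ξ3) * (ξ1 * P + ξ4 * Q) = -(ξ1*ξ2) * S12 + (ξ3*ξ4) * S43 := by
    linear_combination (-ξ1) * hP + ξ4 * hQ + (-(ξ1*ξ4)) * hsym + (ξ1 * P) * h
  have hB3 : (ξ1 + ξ3) * T31 = ξ1 ^ (2*n+2) - ξ3 ^ (2*n+2) := by
    linear_combination (-1 : ℝ) * h3
  have hB4 : (ξ1 + ξ3) * T42 = ξ4 ^ (2*n+2) - ξ2 ^ (2*n+2) := by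
    linear_combination h4 + T42 * h
  linear_combination (-(ξ1+ξ2)) * key + (-(ξ1+ξ2)) * hB3 + (ξ1+ξ2) * hB4
    + (-(ξ1*ξ2)) * h1 + (-(ξ3*ξ4)) * h2
    + (ξ3 * ξ3 ^ (2*n+1) + ξ4 * ξ4 ^ (2*n+1) - ξ3*ξ4*S43) * h
end

section
/- Let k ≥ 1 be an integer and let ξ1, ξ2, ξ3, ξ4 be real numbers with ξ1 + ξ2 + ξ3 + ξ4 = 0. Then Σ_{i+j=2k−1} (−1)^i ( ξ3^i ξ1^j − ξ4^i ξ2^j ) = (ξ1+ξ4) · [ Σ_{i+j=2k−2} (−1)^i ( ξ1^i ξ4^j + ξ2^i ξ3^j ) + Σ_{i+j=2k−1, i≥1, j≥1} ( (−ξ3)^i Σ_{m+l=j−1} ξ1^m (−ξ4)^l + ξ4^j Σ_{m+l=i−1} (−ξ2)^m ξ3^l ) ]. -/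
/-!
Multiplying by `ξ1 + ξ4 = -(ξ2 + ξ3)` collapses every inner sum through
`(x - y) ∑_{i+j=m} xⁱ yʲ = x ^ (m+1) - y ^ (m+1)`. The first bracketed sum becomes the boundary
terms `ξ1ⁿ + ξ4ⁿ - ξ2ⁿ - ξ3ⁿ` (`n = 2k - 1`) of the left side and the second its interior terms:
for odd `i + j` the cross terms `(-ξ3)ⁱ (-ξ4)ʲ` and `ξ4ʲ ξ3ⁱ` cancel, and the reflection
`(i, j) ↦ (j, i)` turns `(-ξ2)ⁱ ξ4ʲ` into `-(-ξ4)ⁱ ξ2ʲ`.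
-/

open Finset

section

variable {R : Type*} [CommRing R]

theorem sub_mul_sum_antidiagonal_pow_mul_pow (x y : R) (n : ℕ) :
    (x - y) * ∑ p ∈ antidiagonal n, x ^ p.1 * y ^ p.2 = x ^ (n + 1) - y ^ (n + 1) := by
  rw [Nat.sum_antidiagonal_eq_sum_range_succ_mk, mul_comm]
  simpa using geom_sum₂_mul x y (n + 1)

theorem neg_one_pow_eq_neg_neg_one_pow_of_odd_add {i j : ℕ} (h : Odd (i + j)) :
    (-1 : R) ^ i = -(-1) ^ j := by
  rcases Nat.even_or_odd i with hi | hi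
  · rw [hi.neg_one_pow, ((Nat.odd_add'.mp h).mpr hi).neg_one_pow, neg_neg]
  · rw [hi.neg_one_pow, ((Nat.odd_add.mp h).mp hi).neg_one_pow]

end

theorem Finset.Nat.sum_antidiagonal_eq_add_add_sum_filter {M : Type*} [AddCommMonoid M] {n : ℕ}
    (hn : 1 ≤ n) (f : ℕ × ℕ → M) :
    ∑ p ∈ antidiagonal n, f p
      = f (0, n) + f (n, 0) + ∑ p ∈ (antidiagonal n).filter (fun p => 1 ≤ p.1 ∧ 1 ≤ p.2), f p := by
  have hends : (antidiagonal n).filter (fun p => ¬(1 ≤ p.1 ∧ 1 ≤ p.2)) = {(0, n), (n, 0)} := by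
    ext ⟨i, j⟩
    simp only [mem_filter, HasAntidiagonal.mem_antidiagonal, mem_insert, mem_singleton, Prod.mk.injEq]
    omega
  rw [← sum_filter_add_sum_filter_not _ (fun p => 1 ≤ p.1 ∧ 1 ≤ p.2), hends,
    sum_pair (by simp [Prod.ext_iff]; omega), add_comm]

theorem Finset.Nat.sum_filter_antidiagonal_swap {M : Type*} [AddCommMonoid M] (n : ℕ)
    (f : ℕ × ℕ → M) :
    ∑ p ∈ (antidiagonal n).filter (fun p => 1 ≤ p.1 ∧ 1 ≤ p.2), f p.swap
      = ∑ p ∈ (antidiagonal n).filter (fun p => 1 ≤ p.1 ∧ 1 ≤ p.2), f p := by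
  rw [sum_filter, sum_filter, ← sum_antidiagonal_swap]
  simp only [Prod.fst_swap, Prod.snd_swap, Prod.swap_swap, and_comm]

section

variable {R : Type*} [CommRing R] {a b c d : R} {n : ℕ}

theorem sum_antidiagonal_neg_one_pow_mul_sub_eq (hn : Odd n) :
    ∑ p ∈ antidiagonal n, (-1 : R) ^ p.1 * (c ^ p.1 * a ^ p.2 - d ^ p.1 * b ^ p.2)
      = a ^ n + d ^ n - (b ^ n + c ^ n)
        + ∑ p ∈ (antidiagonal n).filter (fun p => 1 ≤ p.1 ∧ 1 ≤ p.2),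
            ((-c) ^ p.1 * a ^ p.2 - (-d) ^ p.1 * b ^ p.2) := by
  have hterm (p : ℕ × ℕ) : (-1 : R) ^ p.1 * (c ^ p.1 * a ^ p.2 - d ^ p.1 * b ^ p.2)
      = (-c) ^ p.1 * a ^ p.2 - (-d) ^ p.1 * b ^ p.2 := by
    rw [neg_pow c, neg_pow d]; ring
  simp_rw [hterm]
  rw [Nat.sum_antidiagonal_eq_add_add_sum_filter hn.pos]
  simp only [pow_zero, one_mul, mul_one, hn.neg_pow]
  ring

theorem add_mul_sum_antidiagonal_pred_eq (h : a + b + c + d = 0) (hn : Odd n) :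
    (a + d) * ∑ p ∈ antidiagonal (n - 1),
        (-1 : R) ^ p.1 * (a ^ p.1 * d ^ p.2 + b ^ p.1 * c ^ p.2)
      = a ^ n + d ^ n - (b ^ n + c ^ n) := by
  obtain ⟨m, rfl⟩ : ∃ m, n = m + 1 := ⟨n - 1, by have := hn.pos; omega⟩
  have hsplit : ∑ p ∈ antidiagonal m, (-1 : R) ^ p.1 * (a ^ p.1 * d ^ p.2 + b ^ p.1 * c ^ p.2)
      = ∑ p ∈ antidiagonal m, (-a) ^ p.1 * d ^ p.2 + ∑ p ∈ antidiagonal m, (-b) ^ p.1 * c ^ p.2 := by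
    rw [← sum_add_distrib]
    exact sum_congr rfl fun p _ => by rw [neg_pow a, neg_pow b]; ring
  have had := sub_mul_sum_antidiagonal_pow_mul_pow (-a) d m
  have hbc := sub_mul_sum_antidiagonal_pow_mul_pow (-b) c m
  rw [hn.neg_pow] at had hbc
  rw [Nat.add_sub_cancel, hsplit]
  linear_combination -had + hbc + (∑ p ∈ antidiagonal m, (-b) ^ p.1 * c ^ p.2) * h

theorem add_mul_interior_term_eq (h : a + b + c + d = 0) {i j : ℕ} (hij : Odd (i + j))
    (hi : 1 ≤ i) (hj : 1 ≤ j) :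
    (a + d) * ((-c) ^ i * ∑ q ∈ antidiagonal (j - 1), a ^ q.1 * (-d) ^ q.2
        + d ^ j * ∑ q ∈ antidiagonal (i - 1), (-b) ^ q.1 * c ^ q.2)
      = (-c) ^ i * a ^ j + (-b) ^ i * d ^ j := by
  have hcross : (-c) ^ i * (-d) ^ j = -(d ^ j * c ^ i) := by
    rw [neg_pow c, neg_pow d]
    linear_combination (c ^ i * d ^ j) * ((pow_add (-1 : R) i j).symm.trans hij.neg_one_pow)
  obtain ⟨i, rfl⟩ : ∃ i', i = i' + 1 := ⟨i - 1, by omega⟩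
  obtain ⟨j, rfl⟩ : ∃ j', j = j' + 1 := ⟨j - 1, by omega⟩
  have had := sub_mul_sum_antidiagonal_pow_mul_pow a (-d) j
  have hbc := sub_mul_sum_antidiagonal_pow_mul_pow (-b) c i
  rw [Nat.add_sub_cancel, Nat.add_sub_cancel]
  linear_combination (-c) ^ (i + 1) * had + d ^ (j + 1) * hbc
    + (d ^ (j + 1) * ∑ q ∈ antidiagonal i, (-b) ^ q.1 * c ^ q.2) * h - hcross

theorem add_mul_sum_filter_antidiagonal_eq (h : a + b + c + d = 0) (hn : Odd n) :
    (a + d) * ∑ p ∈ (antidiagonal n).filter (fun p => 1 ≤ p.1 ∧ 1 ≤ p.2),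
        ((-c) ^ p.1 * ∑ q ∈ antidiagonal (p.2 - 1), a ^ q.1 * (-d) ^ q.2
          + d ^ p.2 * ∑ q ∈ antidiagonal (p.1 - 1), (-b) ^ q.1 * c ^ q.2)
      = ∑ p ∈ (antidiagonal n).filter (fun p => 1 ≤ p.1 ∧ 1 ≤ p.2),
          ((-c) ^ p.1 * a ^ p.2 + (-b) ^ p.1 * d ^ p.2) := by
  rw [mul_sum]
  refine sum_congr rfl fun p hp => ?_
  obtain ⟨hpn, hp1, hp2⟩ := by simpa only [mem_filter, HasAntidiagonal.mem_antidiagonal] using hp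
  exact add_mul_interior_term_eq h (hpn ▸ hn) hp1 hp2

theorem sum_filter_antidiagonal_neg_pow_mul_pow_eq_neg (hn : Odd n) (x y : R) :
    ∑ p ∈ (antidiagonal n).filter (fun p => 1 ≤ p.1 ∧ 1 ≤ p.2), (-x) ^ p.1 * y ^ p.2
      = -∑ p ∈ (antidiagonal n).filter (fun p => 1 ≤ p.1 ∧ 1 ≤ p.2), (-y) ^ p.1 * x ^ p.2 := by
  rw [← Nat.sum_filter_antidiagonal_swap n, ← sum_neg_distrib]
  refine sum_congr rfl fun p hp => ?_
  have hodd : Odd (p.2 + p.1) := by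
    rwa [add_comm, HasAntidiagonal.mem_antidiagonal.mp (mem_filter.mp hp).1]
  rw [Prod.fst_swap, Prod.snd_swap, neg_pow x, neg_pow y,
    neg_one_pow_eq_neg_neg_one_pow_of_odd_add hodd]
  ring

end

/-- Identity (3.50): for `k ≥ 1` and reals with `ξ1 + ξ2 + ξ3 + ξ4 = 0`,
`Σ_{i+j=2k−1} (−1)^i (ξ3^i ξ1^j − ξ4^i ξ2^j)` factors as `(ξ1+ξ4)` times the
explicit expression of (3.50). -/
theorem sum_factorization_3_50 (k : ℕ) (hk : 1 ≤ k) (ξ1 ξ2 ξ3 ξ4 : ℝ)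
    (h : ξ1 + ξ2 + ξ3 + ξ4 = 0) :
    ∑ p ∈ antidiagonal (2 * k - 1),
        (-1 : ℝ) ^ p.1 * (ξ3 ^ p.1 * ξ1 ^ p.2 - ξ4 ^ p.1 * ξ2 ^ p.2)
    = (ξ1 + ξ4) *
      ( ∑ p ∈ antidiagonal (2 * k - 2),
          (-1 : ℝ) ^ p.1 * (ξ1 ^ p.1 * ξ4 ^ p.2 + ξ2 ^ p.1 * ξ3 ^ p.2)
      + ∑ p ∈ (antidiagonal (2 * k - 1)).filter (fun p => 1 ≤ p.1 ∧ 1 ≤ p.2),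
          ( (-ξ3) ^ p.1 * ∑ q ∈ antidiagonal (p.2 - 1), ξ1 ^ q.1 * (-ξ4) ^ q.2
          + ξ4 ^ p.2 * ∑ q ∈ antidiagonal (p.1 - 1), (-ξ2) ^ q.1 * ξ3 ^ q.2 ) ) := by
  have hn : Odd (2 * k - 1) := ⟨k - 1, by omega⟩
  rw [show 2 * k - 2 = 2 * k - 1 - 1 by omega, mul_add, add_mul_sum_antidiagonal_pred_eq h hn,
    add_mul_sum_filter_antidiagonal_eq h hn, sum_antidiagonal_neg_one_pow_mul_sub_eq hn,
    sum_add_distrib, sum_sub_distrib, sum_filter_antidiagonal_neg_pow_mul_pow_eq_neg hn ξ2 ξ4]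
  ring
end

section
/- Let p ≥ 4 be an integer and let n1, n2, …, np be nonnegative integers such that n1 ≤ ni ≤ np for every i ∈ {2, …, p−1}, and n1 + np = n2 + n3 + ⋯ + n_{p−1}. Then n2! · n3! ⋯ n_{p−1}! ≤ n1! · np!. -/
lemma ascFactorial_mono_left {m n : ℕ} (h : m ≤ n) : ∀ k, m.ascFactorial k ≤ n.ascFactorial k
  | 0 => le_refl _
  | k + 1 => by
    rw [Nat.ascFactorial_succ, Nat.ascFactorial_succ]
    exact Nat.mul_le_mul (Nat.add_le_add_right h k) (ascFactorial_mono_left h k)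

/-- pair lemma: if `a ≤ x`, `x ≤ b`, `y = a + b - x`, then `x! * y! ≤ a! * b!`. -/
lemma pair_factorial_le {a b x y : ℕ} (hay : a ≤ y) (hax : a ≤ x) (hyb : y ≤ b) (hsum : x + y = a + b) :
    Nat.factorial x * Nat.factorial y ≤ Nat.factorial a * Nat.factorial b := by
  obtain ⟨k, rfl⟩ := Nat.le.dest hax
  obtain ⟨j, rfl⟩ := Nat.le.dest hyb
  have hkj : k = j := by omega
  subst hkj
  calc (a + k).factorial * y.factorial
      = Nat.factorial a * (a+1).ascFactorial k * y.factorial := by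
        rw [Nat.factorial_mul_ascFactorial]
    _ ≤ Nat.factorial a * (y+1).ascFactorial k * y.factorial := by
        exact Nat.mul_le_mul_right _ (Nat.mul_le_mul_left _
          (ascFactorial_mono_left (by omega) k))
    _ = Nat.factorial a * (y.factorial * (y+1).ascFactorial k) := by ring
    _ = Nat.factorial a * (y + k).factorial := by rw [Nat.factorial_mul_ascFactorial]

/-- Lemma 3.4: if `p ≥ 4` and `n 1, …, n p` are nonnegative integers with
`n 1 ≤ n i ≤ n p` for all `i ∈ {2, …, p−1}` and `n 1 + n p = n 2 + ⋯ + n (p−1)`,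
then `n 2 ! ⋯ n (p−1) ! ≤ n 1 ! · n p !`. -/
theorem factorial_product_le (p : ℕ) (hp : 4 ≤ p) (n : ℕ → ℕ)
    (hlow : ∀ i, 2 ≤ i → i ≤ p - 1 → n 1 ≤ n i)
    (hhigh : ∀ i, 2 ≤ i → i ≤ p - 1 → n i ≤ n p)
    (hsum : n 1 + n p = ∑ i ∈ Finset.Icc 2 (p - 1), n i) :
    ∏ i ∈ Finset.Icc 2 (p - 1), Nat.factorial (n i)
      ≤ Nat.factorial (n 1) * Nat.factorial (n p) := by
  have h2 : (2 : ℕ) ∈ Finset.Icc 2 (p - 1) := by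
    simp [Finset.mem_Icc]; omega
  rw [← Finset.prod_erase_mul _ _ h2, ← Finset.sum_erase_add _ _ h2] at *
  set s := (Finset.Icc 2 (p - 1)).erase 2
  have hS : ∏ i ∈ s, Nat.factorial (n i) ≤ Nat.factorial (∑ i ∈ s, n i) :=
    Nat.le_of_dvd (Nat.factorial_pos _) (Nat.prod_factorial_dvd_factorial_sum _ _)
  have hlow2 : n 1 ≤ n 2 := hlow 2 le_rfl (by omega)
  have hhigh2 : n 2 ≤ n p := hhigh 2 le_rfl (by omega)
  have hslow : n 1 ≤ ∑ i ∈ s, n i := by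
    have h3 : (3 : ℕ) ∈ s := by
      simp [s, Finset.mem_erase, Finset.mem_Icc]; omega
    calc n 1 ≤ n 3 := hlow 3 (by omega) (by omega)
      _ ≤ ∑ i ∈ s, n i := Finset.single_le_sum (fun i _ => Nat.zero_le _) h3
  have hshigh : ∑ i ∈ s, n i ≤ n p := by omega
  calc (∏ i ∈ s, Nat.factorial (n i)) * Nat.factorial (n 2)
      ≤ Nat.factorial (∑ i ∈ s, n i) * Nat.factorial (n 2) :=
        Nat.mul_le_mul_right _ hS
    _ ≤ Nat.factorial (n 1) * Nat.factorial (n p) :=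
        pair_factorial_le hlow2 hslow hhigh2 (by omega)
end

section
/- Let σ ≥ 0 and let a, b, c be real numbers. Then Σ_{k=0}^∞ (σ^{k+4}/(k+4)!) Σ_{i+j=k} |a|^{i+1} Σ_{m+l=j} |b|^m |b+c|^l ≤ σ³ e^{σ(|a|+|b|+|c|)}. -/
set_option maxHeartbeats 800000


open Finset

/-- Estimate (3.100): for `σ ≥ 0` and reals `a, b, c`,
`Σ_{k=0}^∞ (σ^{k+4}/(k+4)!) Σ_{i+j=k} |a|^{i+1} Σ_{m+l=j} |b|^m |b+c|^l ≤ σ³ e^{σ(|a|+|b|+|c|)}`. -/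
theorem series_bound_extra_power (σ a b c : ℝ) (hσ : 0 ≤ σ) :
    ∑' k : ℕ, σ ^ (k + 4) / (Nat.factorial (k + 4) : ℝ) *
        ∑ p ∈ antidiagonal k, |a| ^ (p.1 + 1) *
          ∑ q ∈ antidiagonal p.2, |b| ^ q.1 * |b + c| ^ q.2
      ≤ σ ^ 3 * Real.exp (σ * (|a| + |b| + |c|)) := by
  set s : ℝ := |a| + |b| + |c| with hs
  have hs0 : 0 ≤ s := by positivity
  have ha : |a| ≤ s := by
    have h1 := abs_nonneg b; have h2 := abs_nonneg c
    simp only [hs]; linarith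
  have hbc : |b| + |c| ≤ s := by
    have h1 := abs_nonneg a; simp only [hs]; linarith
  have hbc0 : (0:ℝ) ≤ |b| + |c| := by positivity
  set f : ℕ → ℝ := fun k => σ ^ (k + 4) / (Nat.factorial (k + 4) : ℝ) *
        ∑ p ∈ antidiagonal k, |a| ^ (p.1 + 1) *
          ∑ q ∈ antidiagonal p.2, |b| ^ q.1 * |b + c| ^ q.2 with hfdef
  set g : ℕ → ℝ := fun k => σ ^ 3 * ((σ * s) ^ (k + 1) / (Nat.factorial (k + 1) : ℝ)) with hgdef
  have hf0 : ∀ k, 0 ≤ f k := by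
    intro k
    apply mul_nonneg (by positivity)
    apply Finset.sum_nonneg
    intro p _
    apply mul_nonneg (by positivity)
    exact Finset.sum_nonneg fun q _ => by positivity
  have key : ∀ k : ℕ, f k ≤ g k := by
    intro k
    have inner : ∀ j : ℕ, ∑ q ∈ antidiagonal j, |b| ^ q.1 * |b + c| ^ q.2
        ≤ ((j : ℝ) + 1) * (|b| + |c|) ^ j := by
      intro j
      have h := Finset.sum_le_card_nsmul (antidiagonal j)
        (fun q => |b| ^ q.1 * |b + c| ^ q.2) ((|b| + |c|) ^ j) ?_
      · simpa [Nat.card_antidiagonal, nsmul_eq_mul, add_comm] using h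
      · intro q hq
        have hq' : q.1 + q.2 = j := Finset.HasAntidiagonal.mem_antidiagonal.mp hq
        calc |b| ^ q.1 * |b + c| ^ q.2
            ≤ (|b| + |c|) ^ q.1 * (|b| + |c|) ^ q.2 := by
              have h1 : |b| ≤ |b| + |c| := le_add_of_nonneg_right (abs_nonneg c)
              have h2 : |b + c| ≤ |b| + |c| := abs_add_le b c
              exact mul_le_mul (pow_le_pow_left₀ (abs_nonneg b) h1 _)
                (pow_le_pow_left₀ (abs_nonneg _) h2 _) (by positivity) (by positivity)
          _ = (|b| + |c|) ^ j := by rw [← pow_add, hq']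
    have Sle : ∑ p ∈ antidiagonal k, |a| ^ (p.1 + 1) *
          ∑ q ∈ antidiagonal p.2, |b| ^ q.1 * |b + c| ^ q.2
        ≤ ((k : ℝ) + 1) ^ 2 * s ^ (k + 1) := by
      have h := Finset.sum_le_card_nsmul (antidiagonal k)
        (fun p => |a| ^ (p.1 + 1) * ∑ q ∈ antidiagonal p.2, |b| ^ q.1 * |b + c| ^ q.2)
        (((k : ℝ) + 1) * s ^ (k + 1)) ?_
      · rw [Nat.card_antidiagonal, nsmul_eq_mul] at h
        calc _ ≤ ((k + 1 : ℕ) : ℝ) * (((k : ℝ) + 1) * s ^ (k + 1)) := h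
          _ = ((k : ℝ) + 1) ^ 2 * s ^ (k + 1) := by push_cast; ring
      · intro p hp
        have hp' : p.1 + p.2 = k := Finset.HasAntidiagonal.mem_antidiagonal.mp hp
        have hp2 : (p.2 : ℝ) ≤ k := by exact_mod_cast Nat.le.intro (by omega : p.2 + p.1 = k)
        calc |a| ^ (p.1 + 1) * ∑ q ∈ antidiagonal p.2, |b| ^ q.1 * |b + c| ^ q.2
            ≤ s ^ (p.1 + 1) * (((p.2 : ℝ) + 1) * (|b| + |c|) ^ p.2) := by
              apply mul_le_mul (pow_le_pow_left₀ (abs_nonneg a) ha _) (inner p.2)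
                (Finset.sum_nonneg fun q _ => by positivity) (by positivity)
          _ ≤ s ^ (p.1 + 1) * (((k : ℝ) + 1) * s ^ p.2) := by
              gcongr
          _ = ((k : ℝ) + 1) * s ^ (p.1 + 1 + p.2) := by rw [pow_add]; ring
          _ = ((k : ℝ) + 1) * s ^ (k + 1) := by
              congr 2; omega
    have hfrac : ((k : ℝ) + 1) ^ 2 / (Nat.factorial (k + 4) : ℝ)
        ≤ 1 / (Nat.factorial (k + 1) : ℝ) := by
      rw [div_le_div_iff₀ (by positivity) (by positivity)]
      have hnat : (k + 1) ^ 2 * Nat.factorial (k + 1) ≤ Nat.factorial (k + 4) := by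
        have : Nat.factorial (k + 4) = (k + 4) * ((k + 3) * ((k + 2) * Nat.factorial (k + 1))) := by
          rw [show k + 4 = (k + 3) + 1 by omega, Nat.factorial_succ,
            show k + 3 = (k + 2) + 1 by omega, Nat.factorial_succ,
            show k + 2 = (k + 1) + 1 by omega, Nat.factorial_succ]
        rw [this]
        have h2 : (k + 1) ^ 2 ≤ (k + 4) * ((k + 3) * (k + 2)) := by nlinarith
        calc (k + 1) ^ 2 * Nat.factorial (k + 1)
            ≤ (k + 4) * ((k + 3) * (k + 2)) * Nat.factorial (k + 1) :=
              Nat.mul_le_mul_right _ h2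
          _ = (k + 4) * ((k + 3) * ((k + 2) * Nat.factorial (k + 1))) := by ring
      calc ((k : ℝ) + 1) ^ 2 * (Nat.factorial (k + 1) : ℝ)
          = (((k + 1) ^ 2 * Nat.factorial (k + 1) : ℕ) : ℝ) := by push_cast; ring
        _ ≤ ((Nat.factorial (k + 4) : ℕ) : ℝ) := by exact_mod_cast hnat
        _ = 1 * (Nat.factorial (k + 4) : ℝ) := (one_mul _).symm
    calc f k ≤ σ ^ (k + 4) / (Nat.factorial (k + 4) : ℝ) * (((k : ℝ) + 1) ^ 2 * s ^ (k + 1)) := by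
          exact mul_le_mul_of_nonneg_left Sle (by positivity)
      _ = (σ ^ 3 * σ ^ (k + 1) * s ^ (k + 1)) * (((k : ℝ) + 1) ^ 2 / (Nat.factorial (k + 4) : ℝ)) := by
          rw [show k + 4 = k + 1 + 3 by omega, pow_add]; ring
      _ ≤ (σ ^ 3 * σ ^ (k + 1) * s ^ (k + 1)) * (1 / (Nat.factorial (k + 1) : ℝ)) :=
          mul_le_mul_of_nonneg_left hfrac (by positivity)
      _ = g k := by simp only [hgdef, mul_pow]; ring
  have hg1 : Summable (fun k : ℕ => (σ * s) ^ (k + 1) / (Nat.factorial (k + 1) : ℝ)) :=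
    (Real.summable_pow_div_factorial (σ * s)).comp_injective (add_left_injective 1)
  have hg : Summable g := hg1.mul_left _
  have hf : Summable f := Summable.of_nonneg_of_le hf0 key hg
  calc ∑' k, f k ≤ ∑' k, g k := Summable.tsum_le_tsum key hf hg
    _ = σ ^ 3 * ∑' k : ℕ, (σ * s) ^ (k + 1) / (Nat.factorial (k + 1) : ℝ) := tsum_mul_left
    _ ≤ σ ^ 3 * Real.exp (σ * s) := by
        apply mul_le_mul_of_nonneg_left _ (by positivity)
        have hexp : Real.exp (σ * s) = ∑' n : ℕ, (σ * s) ^ n / (Nat.factorial n : ℝ) := by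
          rw [Real.exp_eq_exp_ℝ, NormedSpace.exp_eq_tsum_div]
        rw [hexp]
        exact Summable.tsum_le_tsum_of_inj (f := fun k : ℕ => (σ * s) ^ (k + 1) / (Nat.factorial (k + 1) : ℝ))
          (g := fun n : ℕ => (σ * s) ^ n / (Nat.factorial n : ℝ))
          (fun k : ℕ => k + 1) (fun m n h => by simpa using h)
          (fun n _ => by positivity) (fun k => le_rfl) hg1
          (Real.summable_pow_div_factorial (σ * s))
end

section
/- Let σ ≥ 0 and let ξ1, ξ2, ξ3, ξ4 be real numbers with ξ1 + ξ2 + ξ3 + ξ4 = 0. Then Σ_{k=0}^∞ (σ^{k+4}/(k+4)!) Θ1(k) ≤ 28 σ⁴ e^{σ(|ξ1|+|ξ2|+|ξ3|+|ξ4|)}. -/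
open Finset

/-- The quantity `Θ1(k)` of (3.65), with `ξ 0, ξ 1, ξ 2, ξ 3` playing the roles of
`ξ1, ξ2, ξ3, ξ4`.  The second sum ranges over the 24 ordered triples of pairwise
distinct indices `(p1, p2, p3)` in `{1, 2, 3, 4}`. -/
noncomputable def Theta1 (ξ : Fin 4 → ℝ) (k : ℕ) : ℝ :=
  (∑ p ∈ antidiagonal k,
      ( |ξ 0| ^ p.1 * |ξ 0 + ξ 3| ^ p.2 + |ξ 1| ^ p.1 * |ξ 1 + ξ 3| ^ p.2
      + |ξ 2| ^ p.1 * |ξ 2 + ξ 3| ^ p.2 + |ξ 3| ^ p.1 * |ξ 2 + ξ 3| ^ p.2 ))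
  + ∑ p ∈ antidiagonal k,
      ∑ t ∈ (Finset.univ : Finset (Fin 4 × Fin 4 × Fin 4)).filter
          (fun t => t.1 ≠ t.2.1 ∧ t.1 ≠ t.2.2 ∧ t.2.1 ≠ t.2.2),
        |ξ t.1| ^ p.1 *
          ∑ q ∈ antidiagonal p.2, |ξ t.2.1| ^ q.1 * |ξ t.2.1 + ξ t.2.2| ^ q.2

/-- The quantity `Θ2(k)` of (3.66), with `ξ 0, ξ 1, ξ 2, ξ 3` playing the roles of
`ξ1, ξ2, ξ3, ξ4`. -/
noncomputable def Theta2 (ξ : Fin 4 → ℝ) (k : ℕ) : ℝ :=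
  (∑ p ∈ antidiagonal k, (|ξ 0| ^ p.1 * |ξ 3| ^ p.2 + |ξ 1| ^ p.1 * |ξ 2| ^ p.2))
  + ∑ p ∈ antidiagonal k,
      |ξ 2| ^ p.1 * ∑ q ∈ antidiagonal p.2, |ξ 0| ^ q.1 * |ξ 3| ^ q.2
  + ∑ p ∈ antidiagonal k,
      |ξ 3| ^ p.2 * ∑ q ∈ antidiagonal p.1, |ξ 1| ^ q.1 * |ξ 2| ^ q.2
  + ∑ p ∈ antidiagonal k,
      |ξ 3| ^ p.1 * ∑ q ∈ antidiagonal p.2, |ξ 3| ^ q.1 * |ξ 0| ^ q.2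
  + ∑ p ∈ antidiagonal k,
      (∑ q ∈ antidiagonal p.1, |ξ 0| ^ q.1 * |ξ 3| ^ q.2) *
      (∑ q ∈ antidiagonal p.2, |ξ 1| ^ q.1 * |ξ 3| ^ q.2)
  + ∑ p ∈ antidiagonal k,
      |ξ 3| ^ p.1 *
        ∑ q ∈ antidiagonal p.2,
          ( |ξ 0| ^ q.2 * ∑ r ∈ antidiagonal q.1, |ξ 2| ^ r.1 * |ξ 1| ^ r.2
          + |ξ 1| ^ q.1 * ∑ r ∈ antidiagonal q.2, |ξ 3| ^ r.1 * |ξ 0| ^ r.2 )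

/-- Estimate (3.73): for `σ ≥ 0` and `ξ1 + ξ2 + ξ3 + ξ4 = 0`,
`Σ_{k=0}^∞ (σ^{k+4}/(k+4)!) Θ1(k) ≤ 28 σ⁴ e^{σ(|ξ1|+|ξ2|+|ξ3|+|ξ4|)}`. -/
theorem Theta1_series_bound (σ : ℝ) (hσ : 0 ≤ σ) (ξ : Fin 4 → ℝ)
    (h : ξ 0 + ξ 1 + ξ 2 + ξ 3 = 0) :
    ∑' k : ℕ, σ ^ (k + 4) / (Nat.factorial (k + 4) : ℝ) * Theta1 ξ k
      ≤ 28 * σ ^ 4 * Real.exp (σ * (|ξ 0| + |ξ 1| + |ξ 2| + |ξ 3|)) := by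
  set S := |ξ 0| + |ξ 1| + |ξ 2| + |ξ 3| with hSdef
  have hSsum : S = ∑ l, |ξ l| := by rw [hSdef]; simp [Fin.sum_univ_four]
  have hS0 : 0 ≤ S := by
    rw [hSsum]; exact Finset.sum_nonneg (fun l _ => abs_nonneg _)
  have hSi : ∀ i : Fin 4, |ξ i| ≤ S := by
    intro i
    rw [hSsum]
    exact Finset.single_le_sum (f := fun l => |ξ l|) (fun l _ => abs_nonneg _)
      (Finset.mem_univ i)
  have hpair : ∀ i j : Fin 4, i ≠ j → |ξ i + ξ j| ≤ S := by
    intro i j hij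
    rw [hSsum]
    calc |ξ i + ξ j| ≤ |ξ i| + |ξ j| := abs_add_le _ _
      _ = ∑ l ∈ ({i, j} : Finset (Fin 4)), |ξ l| :=
          (Finset.sum_pair (f := fun l => |ξ l|) hij).symm
      _ ≤ ∑ l, |ξ l| := Finset.sum_le_sum_of_subset_of_nonneg (Finset.subset_univ _)
          (fun l _ _ => abs_nonneg _)
  have hprod : ∀ a b : ℝ, |a| ≤ S → |b| ≤ S → ∀ i j : ℕ,
      |a| ^ i * |b| ^ j ≤ S ^ (i + j) := by
    intro a b ha hb i j
    rw [pow_add]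
    exact mul_le_mul (pow_le_pow_left₀ (abs_nonneg a) ha i)
      (pow_le_pow_left₀ (abs_nonneg b) hb j) (by positivity) (by positivity)
  have hT0 : ∀ k : ℕ, 0 ≤ Theta1 ξ k := by
    intro k; unfold Theta1; positivity
  -- main pointwise bound on `Theta1`
  have hT : ∀ k : ℕ, Theta1 ξ k ≤
      ((4 * (k + 1) + 24 * (k + 1) ^ 2 : ℕ) : ℝ) * S ^ k := by
    intro k
    unfold Theta1
    have h1 : (∑ p ∈ antidiagonal k,
        ( |ξ 0| ^ p.1 * |ξ 0 + ξ 3| ^ p.2 + |ξ 1| ^ p.1 * |ξ 1 + ξ 3| ^ p.2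
        + |ξ 2| ^ p.1 * |ξ 2 + ξ 3| ^ p.2 + |ξ 3| ^ p.1 * |ξ 2 + ξ 3| ^ p.2 ))
        ≤ ((k + 1 : ℕ) : ℝ) * (4 * S ^ k) := by
      calc _ ≤ ∑ _p ∈ antidiagonal k, 4 * S ^ k := by
            refine Finset.sum_le_sum (fun p hp => ?_)
            have hpk : p.1 + p.2 = k := Finset.HasAntidiagonal.mem_antidiagonal.mp hp
            have e1 := hprod _ _ (hSi 0) (hpair 0 3 (by decide)) p.1 p.2
            have e2 := hprod _ _ (hSi 1) (hpair 1 3 (by decide)) p.1 p.2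
            have e3 := hprod _ _ (hSi 2) (hpair 2 3 (by decide)) p.1 p.2
            have e4 := hprod _ _ (hSi 3) (hpair 2 3 (by decide)) p.1 p.2
            rw [hpk] at e1 e2 e3 e4
            linarith
        _ = ((k + 1 : ℕ) : ℝ) * (4 * S ^ k) := by
            rw [Finset.sum_const, Finset.Nat.card_antidiagonal, nsmul_eq_mul]
    have h2 : (∑ p ∈ antidiagonal k,
        ∑ t ∈ (Finset.univ : Finset (Fin 4 × Fin 4 × Fin 4)).filter
            (fun t => t.1 ≠ t.2.1 ∧ t.1 ≠ t.2.2 ∧ t.2.1 ≠ t.2.2),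
          |ξ t.1| ^ p.1 *
            ∑ q ∈ antidiagonal p.2, |ξ t.2.1| ^ q.1 * |ξ t.2.1 + ξ t.2.2| ^ q.2)
        ≤ ((k + 1 : ℕ) : ℝ) * (24 * (((k + 1 : ℕ) : ℝ) * S ^ k)) := by
      calc _ ≤ ∑ _p ∈ antidiagonal k, 24 * (((k + 1 : ℕ) : ℝ) * S ^ k) := by
            refine Finset.sum_le_sum (fun p hp => ?_)
            have hpk : p.1 + p.2 = k := Finset.HasAntidiagonal.mem_antidiagonal.mp hp
            calc _ ≤ ∑ _t ∈ (Finset.univ : Finset (Fin 4 × Fin 4 × Fin 4)).filter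
                  (fun t => t.1 ≠ t.2.1 ∧ t.1 ≠ t.2.2 ∧ t.2.1 ≠ t.2.2),
                  ((k + 1 : ℕ) : ℝ) * S ^ k := by
                  refine Finset.sum_le_sum (fun t ht => ?_)
                  obtain ⟨-, -, -, ht3⟩ :
                      t ∈ Finset.univ ∧ t.1 ≠ t.2.1 ∧ t.1 ≠ t.2.2 ∧ t.2.1 ≠ t.2.2 := by
                    simpa [and_assoc] using Finset.mem_filter.mp ht
                  have hinner : (∑ q ∈ antidiagonal p.2,
                      |ξ t.2.1| ^ q.1 * |ξ t.2.1 + ξ t.2.2| ^ q.2)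
                      ≤ ((p.2 + 1 : ℕ) : ℝ) * S ^ p.2 := by
                    calc _ ≤ ∑ _q ∈ antidiagonal p.2, S ^ p.2 := by
                          refine Finset.sum_le_sum (fun q hq => ?_)
                          have := hprod _ _ (hSi t.2.1) (hpair t.2.1 t.2.2 ht3) q.1 q.2
                          rwa [Finset.HasAntidiagonal.mem_antidiagonal.mp hq] at this
                      _ = ((p.2 + 1 : ℕ) : ℝ) * S ^ p.2 := by
                          rw [Finset.sum_const, Finset.Nat.card_antidiagonal, nsmul_eq_mul]
                  calc |ξ t.1| ^ p.1 *
                        ∑ q ∈ antidiagonal p.2, |ξ t.2.1| ^ q.1 * |ξ t.2.1 + ξ t.2.2| ^ q.2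
                      ≤ S ^ p.1 * (((p.2 + 1 : ℕ) : ℝ) * S ^ p.2) := by
                        refine mul_le_mul (pow_le_pow_left₀ (abs_nonneg _) (hSi t.1) p.1)
                          hinner ?_ (by positivity)
                        exact Finset.sum_nonneg (fun q _ => by positivity)
                    _ = ((p.2 + 1 : ℕ) : ℝ) * S ^ k := by
                        rw [← hpk, pow_add]; ring
                    _ ≤ ((k + 1 : ℕ) : ℝ) * S ^ k := by
                        have : ((p.2 + 1 : ℕ) : ℝ) ≤ ((k + 1 : ℕ) : ℝ) := by
                          exact_mod_cast Nat.succ_le_succ (hpk ▸ Nat.le_add_left p.2 p.1)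
                        exact mul_le_mul_of_nonneg_right this (by positivity)
              _ = 24 * (((k + 1 : ℕ) : ℝ) * S ^ k) := by
                  rw [Finset.sum_const, nsmul_eq_mul]
                  norm_num [show ((Finset.univ : Finset (Fin 4 × Fin 4 × Fin 4)).filter
                    (fun t => t.1 ≠ t.2.1 ∧ t.1 ≠ t.2.2 ∧ t.2.1 ≠ t.2.2)).card = 24
                    from by decide]
        _ = ((k + 1 : ℕ) : ℝ) * (24 * (((k + 1 : ℕ) : ℝ) * S ^ k)) := by
            rw [Finset.sum_const, Finset.Nat.card_antidiagonal, nsmul_eq_mul]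
    have hcomb : ((k + 1 : ℕ) : ℝ) * (4 * S ^ k)
        + ((k + 1 : ℕ) : ℝ) * (24 * (((k + 1 : ℕ) : ℝ) * S ^ k))
        = ((4 * (k + 1) + 24 * (k + 1) ^ 2 : ℕ) : ℝ) * S ^ k := by
      push_cast; ring
    linarith
  -- factorial estimate
  have hfact : ∀ k : ℕ, (4 * (k + 1) + 24 * (k + 1) ^ 2) * Nat.factorial k
      ≤ 28 * Nat.factorial (k + 4) := by
    intro k
    have h1 : Nat.factorial (k + 4)
        = (k + 4) * (k + 3) * (k + 2) * (k + 1) * Nat.factorial k := by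
      simp [Nat.factorial_succ]; ring
    rw [h1]
    have h2 : 4 * (k + 1) + 24 * (k + 1) ^ 2
        ≤ 28 * ((k + 4) * (k + 3) * (k + 2) * (k + 1)) := by
      have e1 : 4 * (k + 1) + 24 * (k + 1) ^ 2 ≤ 28 * ((k + 1) * (k + 1)) := by
        have : k + 1 ≤ (k + 1) * (k + 1) := Nat.le_mul_of_pos_left _ k.succ_pos
        calc 4 * (k + 1) + 24 * (k + 1) ^ 2
            ≤ 4 * ((k + 1) * (k + 1)) + 24 * ((k + 1) * (k + 1)) := by
              rw [pow_two]; omega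
          _ = 28 * ((k + 1) * (k + 1)) := by ring
      have e2 : (k + 1) * (k + 1) ≤ (k + 4) * (k + 3) * (k + 2) * (k + 1) := by
        have : k + 1 ≤ (k + 4) * (k + 3) * (k + 2) := by
          calc k + 1 ≤ (k + 4) * 1 * 1 := by omega
            _ ≤ (k + 4) * (k + 3) * (k + 2) :=
              Nat.mul_le_mul (Nat.mul_le_mul_left _ (by omega)) (by omega)
        exact Nat.mul_le_mul_right _ this
      calc 4 * (k + 1) + 24 * (k + 1) ^ 2 ≤ 28 * ((k + 1) * (k + 1)) := e1
        _ ≤ 28 * ((k + 4) * (k + 3) * (k + 2) * (k + 1)) := Nat.mul_le_mul_left _ e2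
    calc (4 * (k + 1) + 24 * (k + 1) ^ 2) * Nat.factorial k
        ≤ 28 * ((k + 4) * (k + 3) * (k + 2) * (k + 1)) * Nat.factorial k :=
          Nat.mul_le_mul_right _ h2
      _ = 28 * ((k + 4) * (k + 3) * (k + 2) * (k + 1) * Nat.factorial k) := by ring
  -- termwise bound
  have hterm : ∀ k : ℕ, σ ^ (k + 4) / (Nat.factorial (k + 4) : ℝ) * Theta1 ξ k
      ≤ 28 * σ ^ 4 * ((σ * S) ^ k / (Nat.factorial k : ℝ)) := by
    intro k
    have hc : (0:ℝ) ≤ σ ^ (k + 4) / (Nat.factorial (k + 4) : ℝ) := by positivity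
    have key : ((4 * (k + 1) + 24 * (k + 1) ^ 2 : ℕ) : ℝ) / (Nat.factorial (k + 4) : ℝ)
        ≤ 28 / (Nat.factorial k : ℝ) := by
      rw [div_le_div_iff₀ (by positivity) (by positivity)]
      exact_mod_cast hfact k
    calc σ ^ (k + 4) / (Nat.factorial (k + 4) : ℝ) * Theta1 ξ k
        ≤ σ ^ (k + 4) / (Nat.factorial (k + 4) : ℝ)
          * (((4 * (k + 1) + 24 * (k + 1) ^ 2 : ℕ) : ℝ) * S ^ k) :=
          mul_le_mul_of_nonneg_left (hT k) hc
      _ = (σ ^ k * S ^ k * σ ^ 4)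
          * (((4 * (k + 1) + 24 * (k + 1) ^ 2 : ℕ) : ℝ) / (Nat.factorial (k + 4) : ℝ)) := by
          rw [pow_add]; ring
      _ ≤ (σ ^ k * S ^ k * σ ^ 4) * (28 / (Nat.factorial k : ℝ)) :=
          mul_le_mul_of_nonneg_left key (by positivity)
      _ = 28 * σ ^ 4 * ((σ * S) ^ k / (Nat.factorial k : ℝ)) := by
          rw [mul_pow]; ring
  have hg : Summable (fun k : ℕ => 28 * σ ^ 4 * ((σ * S) ^ k / (Nat.factorial k : ℝ))) :=
    (Real.summable_pow_div_factorial (σ * S)).mul_left _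
  have hf0 : ∀ k : ℕ, 0 ≤ σ ^ (k + 4) / (Nat.factorial (k + 4) : ℝ) * Theta1 ξ k :=
    fun k => mul_nonneg (by positivity) (hT0 k)
  have hf : Summable (fun k : ℕ => σ ^ (k + 4) / (Nat.factorial (k + 4) : ℝ) * Theta1 ξ k) :=
    Summable.of_nonneg_of_le hf0 hterm hg
  calc ∑' k : ℕ, σ ^ (k + 4) / (Nat.factorial (k + 4) : ℝ) * Theta1 ξ k
      ≤ ∑' k : ℕ, 28 * σ ^ 4 * ((σ * S) ^ k / (Nat.factorial k : ℝ)) :=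
        Summable.tsum_le_tsum hterm hf hg
    _ = 28 * σ ^ 4 * ∑' k : ℕ, (σ * S) ^ k / (Nat.factorial k : ℝ) := tsum_mul_left
    _ = 28 * σ ^ 4 * Real.exp (σ * S) := by
        rw [Real.exp_eq_exp_ℝ, NormedSpace.exp_eq_tsum_div]
end

section
/- Let σ ≥ 0 and let ξ1, ξ2, ξ3, ξ4 be real numbers with ξ1 + ξ2 + ξ3 + ξ4 = 0. Then Σ_{k=0}^∞ (σ^{k+4}/(k+4)!) Θ2(k) ≤ 15 σ⁴ e^{σ(|ξ1|+|ξ2|+|ξ3|+|ξ4|)}. -/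
/-!
Every `|ξ i|` is at most `S = |ξ 0| + |ξ 1| + |ξ 2| + |ξ 3|`, so a nested antidiagonal sum of
monomials of total degree `k` is at most its number of terms times `S ^ k`. Bounds of the form
`f i ≤ A * S ^ i` for `i ≤ n` multiply under antidiagonal convolution at the cost of a factor
`n + 1`, which gives `Θ2(k) ≤ 8 (k + 1)³ S ^ k`. As `k! (k + 1)⁴ ≤ (k + 4)!`, the `k`-th term of
the series is at most `8 σ⁴ (σ S) ^ k / k!`, and the exponential series sums these to
`8 σ⁴ e^{σ S}`.
-/

open Finset

def PowBounded (n : ℕ) (S A : ℝ) (f : ℕ → ℝ) : Prop :=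
  ∀ i ≤ n, 0 ≤ f i ∧ f i ≤ A * S ^ i

namespace PowBounded

variable {n : ℕ} {S A B : ℝ} {f g : ℕ → ℝ}

lemma pow {x : ℝ} (hx : 0 ≤ x) (hxS : x ≤ S) : PowBounded n S 1 (x ^ ·) :=
  fun i _ => ⟨pow_nonneg hx i, by simpa using pow_le_pow_left₀ hx hxS i⟩

lemma add (hf : PowBounded n S A f) (hg : PowBounded n S B g) :
    PowBounded n S (A + B) (fun i => f i + g i) := fun i hi => by
  obtain ⟨hf0, hfA⟩ := hf i hi
  obtain ⟨hg0, hgB⟩ := hg i hi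
  exact ⟨add_nonneg hf0 hg0, by linarith⟩

lemma conv (hf : PowBounded n S A f) (hg : PowBounded n S B g) :
    PowBounded n S ((n + 1) * (A * B)) (fun m => ∑ p ∈ antidiagonal m, f p.1 * g p.2) := by
  intro m hm
  have hterm : ∀ p ∈ antidiagonal m, 0 ≤ f p.1 * g p.2 ∧ f p.1 * g p.2 ≤ A * B * S ^ m := by
    intro p hp
    rw [HasAntidiagonal.mem_antidiagonal] at hp
    obtain ⟨hf0, hfA⟩ := hf p.1 (by omega)
    obtain ⟨hg0, hgB⟩ := hg p.2 (by omega)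
    refine ⟨mul_nonneg hf0 hg0, ?_⟩
    calc f p.1 * g p.2 ≤ A * S ^ p.1 * (B * S ^ p.2) :=
          mul_le_mul hfA hgB hg0 (hf0.trans hfA)
      _ = A * B * S ^ m := by rw [← hp, pow_add]; ring
  refine ⟨sum_nonneg fun p hp => (hterm p hp).1, ?_⟩
  calc ∑ p ∈ antidiagonal m, f p.1 * g p.2
      ≤ (antidiagonal m).card • (A * B * S ^ m) :=
        sum_le_card_nsmul _ _ _ fun p hp => (hterm p hp).2
    _ = (m + 1) * (A * B * S ^ m) := by
        rw [Nat.card_antidiagonal, nsmul_eq_mul]; push_cast; ring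
    _ ≤ (n + 1) * (A * B * S ^ m) := by
        have hbound : 0 ≤ A * B * S ^ m := by
          obtain ⟨h0, h1⟩ := hterm (m, 0) (by simp)
          exact h0.trans h1
        gcongr
    _ = (n + 1) * (A * B) * S ^ m := by ring

lemma mono (hf : PowBounded n S A f) (hS : 0 ≤ S) (hAB : A ≤ B) : PowBounded n S B f :=
  fun i hi => ⟨(hf i hi).1, (hf i hi).2.trans (by gcongr)⟩

end PowBounded

lemma powBounded_theta2 {ξ : Fin 4 → ℝ} {S : ℝ} (hS : ∀ i, |ξ i| ≤ S) (n : ℕ) :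
    PowBounded n S (8 * (n + 1) ^ 3) (Theta2 ξ) := by
  have e (i : Fin 4) : PowBounded n S 1 (|ξ i| ^ ·) := .pow (abs_nonneg _) (hS i)
  have h := ((((((((e 0).conv (e 3)).add ((e 1).conv (e 2))).add
    ((e 2).conv ((e 0).conv (e 3)))).add (((e 1).conv (e 2)).conv (e 3))).add
    ((e 3).conv ((e 3).conv (e 0)))).add (((e 0).conv (e 3)).conv ((e 1).conv (e 3)))).add
    ((e 3).conv ((((e 2).conv (e 1)).conv (e 0)).add ((e 1).conv ((e 3).conv (e 0))))))
  convert h.mono ((abs_nonneg _).trans (hS 0)) ?_ using 1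
  · funext k
    simp only [Theta2, sum_add_distrib, mul_add, mul_comm]
  · have hn : (0 : ℝ) ≤ n := n.cast_nonneg
    ring_nf
    nlinarith

lemma pow_div_factorial_mul_le {σ S θ C : ℝ} {k d : ℕ} (hσ : 0 ≤ σ) (hθ₀ : 0 ≤ θ)
    (hθ : θ ≤ C * (k + 1) ^ d * S ^ k) :
    σ ^ (k + d) / (k + d).factorial * θ ≤ C * σ ^ d * ((σ * S) ^ k / k.factorial) := by
  have hfact : (k.factorial * (k + 1) ^ d : ℝ) ≤ (k + d).factorial := by
    exact_mod_cast Nat.factorial_mul_pow_le_factorial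
  calc σ ^ (k + d) / (k + d).factorial * θ
      ≤ σ ^ (k + d) / (k.factorial * (k + 1) ^ d) * (C * (k + 1) ^ d * S ^ k) := by
        gcongr
    _ = C * σ ^ d * ((σ * S) ^ k / k.factorial) := by
        field_simp
        ring

lemma tsum_le_mul_exp {a : ℕ → ℝ} {C x : ℝ} (ha : ∀ k, 0 ≤ a k)
    (h : ∀ k, a k ≤ C * (x ^ k / k.factorial)) : ∑' k, a k ≤ C * Real.exp x := by
  have hexp : HasSum (fun k => C * (x ^ k / k.factorial)) (C * Real.exp x) := by
    rw [Real.exp_eq_exp_ℝ]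
    exact (NormedSpace.expSeries_div_hasSum_exp x).mul_left C
  exact hasSum_le h (hexp.summable.of_nonneg_of_le ha h).hasSum hexp

theorem Theta2_series_bound_general (σ : ℝ) (hσ : 0 ≤ σ) (ξ : Fin 4 → ℝ) :
    ∑' k : ℕ, σ ^ (k + 4) / (Nat.factorial (k + 4) : ℝ) * Theta2 ξ k
      ≤ 15 * σ ^ 4 * Real.exp (σ * (|ξ 0| + |ξ 1| + |ξ 2| + |ξ 3|)) := by
  set S := |ξ 0| + |ξ 1| + |ξ 2| + |ξ 3|
  have hS (i : Fin 4) : |ξ i| ≤ S := by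
    simpa only [Fin.sum_univ_four] using
      single_le_sum (f := fun j => |ξ j|) (fun j _ => abs_nonneg (ξ j)) (mem_univ i)
  have hθ (k : ℕ) := powBounded_theta2 hS k k le_rfl
  calc ∑' k : ℕ, σ ^ (k + 4) / (Nat.factorial (k + 4) : ℝ) * Theta2 ξ k
      ≤ 8 * σ ^ 4 * Real.exp (σ * S) := by
        refine tsum_le_mul_exp (fun k => mul_nonneg (by positivity) (hθ k).1) fun k => ?_
        refine pow_div_factorial_mul_le hσ (hθ k).1 ((hθ k).2.trans ?_)
        have hS₀ : 0 ≤ S := (abs_nonneg _).trans (hS 0)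
        gcongr
        · linarith [k.cast_nonneg (α := ℝ)]
        · norm_num
    _ ≤ 15 * σ ^ 4 * Real.exp (σ * S) := by gcongr; norm_num

/-- Estimate (3.74): for `σ ≥ 0` and `ξ1 + ξ2 + ξ3 + ξ4 = 0`,
`Σ_{k=0}^∞ (σ^{k+4}/(k+4)!) Θ2(k) ≤ 15 σ⁴ e^{σ(|ξ1|+|ξ2|+|ξ3|+|ξ4|)}`. -/
theorem Theta2_series_bound (σ : ℝ) (hσ : 0 ≤ σ) (ξ : Fin 4 → ℝ)
    (h : ξ 0 + ξ 1 + ξ 2 + ξ 3 = 0) :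
    ∑' k : ℕ, σ ^ (k + 4) / (Nat.factorial (k + 4) : ℝ) * Theta2 ξ k
      ≤ 15 * σ ^ 4 * Real.exp (σ * (|ξ 0| + |ξ 1| + |ξ 2| + |ξ 3|)) :=
  Theta2_series_bound_general σ hσ ξ
end

section
/- Let σ ≥ 0 and let ξ1, ξ2, ξ3, ξ4 be real numbers with ξ1 + ξ2 + ξ3 + ξ4 = 0. Then Σ_{k=0}^∞ (σ^{k+4}/(k+4)!) ( Θ1(k) + Θ2(k) ) ≤ 43 σ⁴ e^{σ(|ξ1|+|ξ2|+|ξ3|+|ξ4|)}. -/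
open Finset

private lemma sum_ad_le {k : ℕ} {f : ℕ × ℕ → ℝ} {B : ℝ}
    (h : ∀ p : ℕ × ℕ, p.1 + p.2 = k → f p ≤ B) :
    ∑ p ∈ antidiagonal k, f p ≤ ((k : ℝ) + 1) * B := by
  have := Finset.sum_le_card_nsmul (antidiagonal k) f B
    (fun p hp => h p (Finset.HasAntidiagonal.mem_antidiagonal.mp hp))
  simpa [Nat.card_antidiagonal, nsmul_eq_mul, add_comm] using this

private lemma pow_pair_le {S a b : ℝ} (ha0 : 0 ≤ a) (ha : a ≤ S) (hb0 : 0 ≤ b) (hb : b ≤ S)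
    {i j k : ℕ} (hij : i + j = k) : a ^ i * b ^ j ≤ S ^ k := by
  have hS : 0 ≤ S := le_trans ha0 ha
  calc a ^ i * b ^ j ≤ S ^ i * S ^ j :=
        mul_le_mul (pow_le_pow_left₀ ha0 ha i) (pow_le_pow_left₀ hb0 hb j)
          (pow_nonneg hb0 j) (pow_nonneg hS i)
    _ = S ^ k := by rw [← pow_add, hij]

private lemma sum_pair_le {S a b : ℝ} (ha0 : 0 ≤ a) (ha : a ≤ S) (hb0 : 0 ≤ b) (hb : b ≤ S)
    (k : ℕ) : ∑ q ∈ antidiagonal k, a ^ q.1 * b ^ q.2 ≤ ((k : ℝ) + 1) * S ^ k :=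
  sum_ad_le fun _ hp => pow_pair_le ha0 ha hb0 hb hp

private lemma sum_double_le {S a b c : ℝ} (ha0 : 0 ≤ a) (ha : a ≤ S)
    (hb0 : 0 ≤ b) (hb : b ≤ S) (hc0 : 0 ≤ c) (hc : c ≤ S)
    {i j k : ℕ} (hij : i + j = k) :
    a ^ i * ∑ q ∈ antidiagonal j, b ^ q.1 * c ^ q.2 ≤ ((k : ℝ) + 1) * S ^ k := by
  have hS : 0 ≤ S := le_trans ha0 ha
  have hj : (j : ℝ) + 1 ≤ (k : ℝ) + 1 := by
    have : j ≤ k := le_of_add_le_right (le_of_eq hij)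
    exact_mod_cast Nat.succ_le_succ this
  calc a ^ i * ∑ q ∈ antidiagonal j, b ^ q.1 * c ^ q.2
      ≤ S ^ i * (((j : ℝ) + 1) * S ^ j) := by
        refine mul_le_mul (pow_le_pow_left₀ ha0 ha i) (sum_pair_le hb0 hb hc0 hc j)
          (Finset.sum_nonneg fun q _ => mul_nonneg (pow_nonneg hb0 _) (pow_nonneg hc0 _))
          (pow_nonneg hS i)
    _ = ((j : ℝ) + 1) * (S ^ i * S ^ j) := by ring
    _ ≤ ((k : ℝ) + 1) * S ^ k := by
        rw [← pow_add, hij]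
        exact mul_le_mul_of_nonneg_right hj (pow_nonneg hS k)
private lemma theta1_nonneg (ξ : Fin 4 → ℝ) (k : ℕ) : 0 ≤ Theta1 ξ k := by
  unfold Theta1; positivity

private lemma theta2_nonneg (ξ : Fin 4 → ℝ) (k : ℕ) : 0 ≤ Theta2 ξ k := by
  unfold Theta2; positivity

private lemma theta_le (ξ : Fin 4 → ℝ) (h : ξ 0 + ξ 1 + ξ 2 + ξ 3 = 0) (k : ℕ) :
    Theta1 ξ k + Theta2 ξ k
      ≤ 36 * ((k : ℝ) + 1) ^ 3 * (|ξ 0| + |ξ 1| + |ξ 2| + |ξ 3|) ^ k := by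
  set S := |ξ 0| + |ξ 1| + |ξ 2| + |ξ 3| with hSdef
  have habs : ∀ i : Fin 4, 0 ≤ |ξ i| := fun i => abs_nonneg _
  have hle : ∀ i : Fin 4, |ξ i| ≤ S := by
    have h0 := habs 0; have h1 := habs 1; have h2 := habs 2; have h3 := habs 3
    intro i
    fin_cases i
    · show |ξ 0| ≤ S; simp only [hSdef]; linarith
    · show |ξ 1| ≤ S; simp only [hSdef]; linarith
    · show |ξ 2| ≤ S; simp only [hSdef]; linarith
    · show |ξ 3| ≤ S; simp only [hSdef]; linarith
  have h2 : ∀ i : Fin 4, 2 * |ξ i| ≤ S := by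
    have key : ∀ x y z w : ℝ, x + y + z + w = 0 → 2 * |x| ≤ |x| + |y| + |z| + |w| := by
      intro x y z w hx
      have e : x = -(y + z + w) := by linarith
      have : |x| ≤ |y| + |z| + |w| := by
        rw [e, abs_neg]; exact abs_add_three y z w
      linarith
    intro i
    fin_cases i
    · show 2 * |ξ 0| ≤ S
      have := key (ξ 0) (ξ 1) (ξ 2) (ξ 3) (by linarith)
      simp only [hSdef]; linarith
    · show 2 * |ξ 1| ≤ S
      have := key (ξ 1) (ξ 0) (ξ 2) (ξ 3) (by linarith)
      simp only [hSdef]; linarith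
    · show 2 * |ξ 2| ≤ S
      have := key (ξ 2) (ξ 0) (ξ 1) (ξ 3) (by linarith)
      simp only [hSdef]; linarith
    · show 2 * |ξ 3| ≤ S
      have := key (ξ 3) (ξ 0) (ξ 1) (ξ 2) (by linarith)
      simp only [hSdef]; linarith
  have hpair : ∀ i j : Fin 4, |ξ i + ξ j| ≤ S := by
    intro i j
    have hi := h2 i; have hj := h2 j
    calc |ξ i + ξ j| ≤ |ξ i| + |ξ j| := abs_add_le _ _
      _ ≤ S := by linarith
  have hpair0 : ∀ i j : Fin 4, 0 ≤ |ξ i + ξ j| := fun _ _ => abs_nonneg _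
  have hS : 0 ≤ S := le_trans (habs 0) (hle 0)
  have hSk : 0 ≤ S ^ k := pow_nonneg hS k
  set K : ℝ := (k : ℝ) + 1 with hK
  have hK1 : 1 ≤ K := by rw [hK]; linarith [Nat.cast_nonneg (α := ℝ) k]
  have hK0 : 0 ≤ K := by linarith
  -- Θ1 bounds
  have hT1a : ∑ p ∈ antidiagonal k,
      ( |ξ 0| ^ p.1 * |ξ 0 + ξ 3| ^ p.2 + |ξ 1| ^ p.1 * |ξ 1 + ξ 3| ^ p.2
      + |ξ 2| ^ p.1 * |ξ 2 + ξ 3| ^ p.2 + |ξ 3| ^ p.1 * |ξ 2 + ξ 3| ^ p.2 )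
      ≤ K * (4 * S ^ k) := by
    refine sum_ad_le fun p hp => ?_
    have b1 := pow_pair_le (habs 0) (hle 0) (hpair0 0 3) (hpair 0 3) hp
    have b2 := pow_pair_le (habs 1) (hle 1) (hpair0 1 3) (hpair 1 3) hp
    have b3 := pow_pair_le (habs 2) (hle 2) (hpair0 2 3) (hpair 2 3) hp
    have b4 := pow_pair_le (habs 3) (hle 3) (hpair0 2 3) (hpair 2 3) hp
    linarith
  have hT1b : ∑ p ∈ antidiagonal k,
      ∑ t ∈ (Finset.univ : Finset (Fin 4 × Fin 4 × Fin 4)).filter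
          (fun t => t.1 ≠ t.2.1 ∧ t.1 ≠ t.2.2 ∧ t.2.1 ≠ t.2.2),
        |ξ t.1| ^ p.1 *
          ∑ q ∈ antidiagonal p.2, |ξ t.2.1| ^ q.1 * |ξ t.2.1 + ξ t.2.2| ^ q.2
      ≤ K * (24 * (K * S ^ k)) := by
    refine sum_ad_le fun p hp => ?_
    have hcard : ((Finset.univ : Finset (Fin 4 × Fin 4 × Fin 4)).filter
        (fun t => t.1 ≠ t.2.1 ∧ t.1 ≠ t.2.2 ∧ t.2.1 ≠ t.2.2)).card = 24 := by decide
    have := Finset.sum_le_card_nsmul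
      ((Finset.univ : Finset (Fin 4 × Fin 4 × Fin 4)).filter
        (fun t => t.1 ≠ t.2.1 ∧ t.1 ≠ t.2.2 ∧ t.2.1 ≠ t.2.2))
      (fun t => |ξ t.1| ^ p.1 *
          ∑ q ∈ antidiagonal p.2, |ξ t.2.1| ^ q.1 * |ξ t.2.1 + ξ t.2.2| ^ q.2)
      (K * S ^ k)
      (fun t _ => sum_double_le (habs t.1) (hle t.1) (habs t.2.1) (hle t.2.1)
        (hpair0 t.2.1 t.2.2) (hpair t.2.1 t.2.2) hp)
    rw [hcard] at this
    simpa [nsmul_eq_mul] using this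
  -- Θ2 bounds
  have ht2a : ∑ p ∈ antidiagonal k, (|ξ 0| ^ p.1 * |ξ 3| ^ p.2 + |ξ 1| ^ p.1 * |ξ 2| ^ p.2)
      ≤ K * (2 * S ^ k) := by
    refine sum_ad_le fun p hp => ?_
    have b1 := pow_pair_le (habs 0) (hle 0) (habs 3) (hle 3) hp
    have b2 := pow_pair_le (habs 1) (hle 1) (habs 2) (hle 2) hp
    linarith
  have ht2b : ∑ p ∈ antidiagonal k,
      |ξ 2| ^ p.1 * ∑ q ∈ antidiagonal p.2, |ξ 0| ^ q.1 * |ξ 3| ^ q.2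
      ≤ K * (K * S ^ k) :=
    sum_ad_le fun p hp =>
      sum_double_le (habs 2) (hle 2) (habs 0) (hle 0) (habs 3) (hle 3) hp
  have ht2c : ∑ p ∈ antidiagonal k,
      |ξ 3| ^ p.2 * ∑ q ∈ antidiagonal p.1, |ξ 1| ^ q.1 * |ξ 2| ^ q.2
      ≤ K * (K * S ^ k) :=
    sum_ad_le fun p hp =>
      sum_double_le (habs 3) (hle 3) (habs 1) (hle 1) (habs 2) (hle 2)
        (by omega : p.2 + p.1 = k)
  have ht2d : ∑ p ∈ antidiagonal k,
      |ξ 3| ^ p.1 * ∑ q ∈ antidiagonal p.2, |ξ 3| ^ q.1 * |ξ 0| ^ q.2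
      ≤ K * (K * S ^ k) :=
    sum_ad_le fun p hp =>
      sum_double_le (habs 3) (hle 3) (habs 3) (hle 3) (habs 0) (hle 0) hp
  have ht2e : ∑ p ∈ antidiagonal k,
      (∑ q ∈ antidiagonal p.1, |ξ 0| ^ q.1 * |ξ 3| ^ q.2) *
      (∑ q ∈ antidiagonal p.2, |ξ 1| ^ q.1 * |ξ 3| ^ q.2)
      ≤ K * (K ^ 2 * S ^ k) := by
    refine sum_ad_le fun p hp => ?_
    have hp1 : ((p.1 : ℝ) + 1) ≤ K := by
      rw [hK]; exact_mod_cast Nat.succ_le_succ (by omega : p.1 ≤ k)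
    have hp2 : ((p.2 : ℝ) + 1) ≤ K := by
      rw [hK]; exact_mod_cast Nat.succ_le_succ (by omega : p.2 ≤ k)
    have b1 : (∑ q ∈ antidiagonal p.1, |ξ 0| ^ q.1 * |ξ 3| ^ q.2) ≤ K * S ^ p.1 :=
      (sum_pair_le (habs 0) (hle 0) (habs 3) (hle 3) p.1).trans
        (mul_le_mul_of_nonneg_right hp1 (pow_nonneg hS _))
    have b2 : (∑ q ∈ antidiagonal p.2, |ξ 1| ^ q.1 * |ξ 3| ^ q.2) ≤ K * S ^ p.2 :=
      (sum_pair_le (habs 1) (hle 1) (habs 3) (hle 3) p.2).trans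
        (mul_le_mul_of_nonneg_right hp2 (pow_nonneg hS _))
    calc (∑ q ∈ antidiagonal p.1, |ξ 0| ^ q.1 * |ξ 3| ^ q.2) *
        (∑ q ∈ antidiagonal p.2, |ξ 1| ^ q.1 * |ξ 3| ^ q.2)
        ≤ (K * S ^ p.1) * (K * S ^ p.2) := by
          refine mul_le_mul b1 b2 ?_ ?_
          · exact Finset.sum_nonneg fun q _ =>
              mul_nonneg (pow_nonneg (habs 1) _) (pow_nonneg (habs 3) _)
          · positivity
      _ = K ^ 2 * (S ^ p.1 * S ^ p.2) := by ring
      _ = K ^ 2 * S ^ k := by rw [← pow_add, hp]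
  have ht2f : ∑ p ∈ antidiagonal k,
      |ξ 3| ^ p.1 *
        ∑ q ∈ antidiagonal p.2,
          ( |ξ 0| ^ q.2 * ∑ r ∈ antidiagonal q.1, |ξ 2| ^ r.1 * |ξ 1| ^ r.2
          + |ξ 1| ^ q.1 * ∑ r ∈ antidiagonal q.2, |ξ 3| ^ r.1 * |ξ 0| ^ r.2 )
      ≤ K * (2 * (K ^ 2 * S ^ k)) := by
    refine sum_ad_le fun p hp => ?_
    have hp2K : ((p.2 : ℝ) + 1) ≤ K := by
      rw [hK]; exact_mod_cast Nat.succ_le_succ (by omega : p.2 ≤ k)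
    have hinner : (∑ q ∈ antidiagonal p.2,
          ( |ξ 0| ^ q.2 * ∑ r ∈ antidiagonal q.1, |ξ 2| ^ r.1 * |ξ 1| ^ r.2
          + |ξ 1| ^ q.1 * ∑ r ∈ antidiagonal q.2, |ξ 3| ^ r.1 * |ξ 0| ^ r.2 ))
        ≤ ((p.2 : ℝ) + 1) * (2 * (K * S ^ p.2)) := by
      refine sum_ad_le fun q hq => ?_
      have bA : |ξ 0| ^ q.2 * ∑ r ∈ antidiagonal q.1, |ξ 2| ^ r.1 * |ξ 1| ^ r.2
          ≤ ((p.2 : ℝ) + 1) * S ^ p.2 :=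
        sum_double_le (habs 0) (hle 0) (habs 2) (hle 2) (habs 1) (hle 1)
          (by omega : q.2 + q.1 = p.2)
      have bB : |ξ 1| ^ q.1 * ∑ r ∈ antidiagonal q.2, |ξ 3| ^ r.1 * |ξ 0| ^ r.2
          ≤ ((p.2 : ℝ) + 1) * S ^ p.2 :=
        sum_double_le (habs 1) (hle 1) (habs 3) (hle 3) (habs 0) (hle 0) hq
      have hKS : ((p.2 : ℝ) + 1) * S ^ p.2 ≤ K * S ^ p.2 :=
        mul_le_mul_of_nonneg_right hp2K (pow_nonneg hS _)
      linarith
    have hinner' : (∑ q ∈ antidiagonal p.2,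
          ( |ξ 0| ^ q.2 * ∑ r ∈ antidiagonal q.1, |ξ 2| ^ r.1 * |ξ 1| ^ r.2
          + |ξ 1| ^ q.1 * ∑ r ∈ antidiagonal q.2, |ξ 3| ^ r.1 * |ξ 0| ^ r.2 ))
        ≤ K * (2 * (K * S ^ p.2)) := by
      refine hinner.trans (mul_le_mul_of_nonneg_right hp2K ?_)
      positivity
    have hinner0 : (0:ℝ) ≤ ∑ q ∈ antidiagonal p.2,
          ( |ξ 0| ^ q.2 * ∑ r ∈ antidiagonal q.1, |ξ 2| ^ r.1 * |ξ 1| ^ r.2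
          + |ξ 1| ^ q.1 * ∑ r ∈ antidiagonal q.2, |ξ 3| ^ r.1 * |ξ 0| ^ r.2 ) := by
      positivity
    calc |ξ 3| ^ p.1 * ∑ q ∈ antidiagonal p.2,
          ( |ξ 0| ^ q.2 * ∑ r ∈ antidiagonal q.1, |ξ 2| ^ r.1 * |ξ 1| ^ r.2
          + |ξ 1| ^ q.1 * ∑ r ∈ antidiagonal q.2, |ξ 3| ^ r.1 * |ξ 0| ^ r.2 )
        ≤ S ^ p.1 * (K * (2 * (K * S ^ p.2))) :=
          mul_le_mul (pow_le_pow_left₀ (habs 3) (hle 3) _) hinner' hinner0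
            (pow_nonneg hS _)
      _ = 2 * K ^ 2 * (S ^ p.1 * S ^ p.2) := by ring
      _ = 2 * (K ^ 2 * S ^ k) := by rw [← pow_add, hp]; ring
  -- combine
  have htotal : Theta1 ξ k + Theta2 ξ k
      ≤ K * (4 * S ^ k) + K * (24 * (K * S ^ k))
        + (K * (2 * S ^ k) + K * (K * S ^ k) + K * (K * S ^ k) + K * (K * S ^ k)
          + K * (K ^ 2 * S ^ k) + K * (2 * (K ^ 2 * S ^ k))) := by
    unfold Theta1 Theta2
    refine add_le_add (add_le_add hT1a hT1b) ?_
    exact add_le_add (add_le_add (add_le_add (add_le_add (add_le_add ht2a ht2b)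
      ht2c) ht2d) ht2e) ht2f
  refine htotal.trans ?_
  have : K * (4 * S ^ k) + K * (24 * (K * S ^ k))
        + (K * (2 * S ^ k) + K * (K * S ^ k) + K * (K * S ^ k) + K * (K * S ^ k)
          + K * (K ^ 2 * S ^ k) + K * (2 * (K ^ 2 * S ^ k)))
      = (6 * K + 27 * K ^ 2 + 3 * K ^ 3) * S ^ k := by ring
  rw [this]
  have hKK : 6 * K + 27 * K ^ 2 + 3 * K ^ 3 ≤ 36 * K ^ 3 := by nlinarith
  calc (6 * K + 27 * K ^ 2 + 3 * K ^ 3) * S ^ k ≤ (36 * K ^ 3) * S ^ k :=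
        mul_le_mul_of_nonneg_right hKK hSk
    _ = 36 * K ^ 3 * S ^ k := by ring

/-- The key pointwise bound behind Lemma 3.5: for `σ ≥ 0` and `ξ1 + ξ2 + ξ3 + ξ4 = 0`,
`Σ_{k=0}^∞ (σ^{k+4}/(k+4)!) (Θ1(k) + Θ2(k)) ≤ 43 σ⁴ e^{σ(|ξ1|+|ξ2|+|ξ3|+|ξ4|)}`. -/
theorem Theta_sum_series_bound (σ : ℝ) (hσ : 0 ≤ σ) (ξ : Fin 4 → ℝ)
    (h : ξ 0 + ξ 1 + ξ 2 + ξ 3 = 0) :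
    ∑' k : ℕ, σ ^ (k + 4) / (Nat.factorial (k + 4) : ℝ) * (Theta1 ξ k + Theta2 ξ k)
      ≤ 43 * σ ^ 4 * Real.exp (σ * (|ξ 0| + |ξ 1| + |ξ 2| + |ξ 3|)) := by
  set S := |ξ 0| + |ξ 1| + |ξ 2| + |ξ 3| with hSdef
  have hS : 0 ≤ S := by rw [hSdef]; positivity
  have hterm : ∀ k : ℕ,
      σ ^ (k + 4) / (Nat.factorial (k + 4) : ℝ) * (Theta1 ξ k + Theta2 ξ k)
        ≤ 43 * σ ^ 4 * ((σ * S) ^ k / (Nat.factorial k : ℝ)) := by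
    intro k
    have hθ := theta_le ξ h k
    have step1 : σ ^ (k + 4) / (Nat.factorial (k + 4) : ℝ) * (Theta1 ξ k + Theta2 ξ k)
        ≤ σ ^ (k + 4) / (Nat.factorial (k + 4) : ℝ) * (36 * ((k : ℝ) + 1) ^ 3 * S ^ k) :=
      mul_le_mul_of_nonneg_left hθ (by positivity)
    refine step1.trans ?_
    have hfact : (Nat.factorial (k + 4) : ℝ)
        = ((k : ℝ) + 4) * ((k : ℝ) + 3) * ((k : ℝ) + 2) * ((k : ℝ) + 1)
          * (Nat.factorial k : ℝ) := by
      have : Nat.factorial (k + 4)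
          = (k + 4) * ((k + 3) * ((k + 2) * ((k + 1) * Nat.factorial k))) := by
        simp [Nat.factorial_succ]
      rw [this]; push_cast; ring
    have hdiv : 36 * ((k : ℝ) + 1) ^ 3 / (Nat.factorial (k + 4) : ℝ)
        ≤ 43 / (Nat.factorial k : ℝ) := by
      rw [div_le_div_iff₀ (by positivity) (by positivity), hfact]
      have hk0 : (0 : ℝ) ≤ (k : ℝ) := Nat.cast_nonneg k
      have hfk : (0 : ℝ) < (Nat.factorial k : ℝ) := by
        exact_mod_cast Nat.factorial_pos k
      nlinarith [mul_pos (mul_pos hfk hfk) hfk, sq_nonneg ((k:ℝ)+1)]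
    calc σ ^ (k + 4) / (Nat.factorial (k + 4) : ℝ) * (36 * ((k : ℝ) + 1) ^ 3 * S ^ k)
        = (σ ^ 4 * σ ^ k * S ^ k) * (36 * ((k : ℝ) + 1) ^ 3 / (Nat.factorial (k + 4) : ℝ)) := by
          rw [pow_add]; ring
      _ ≤ (σ ^ 4 * σ ^ k * S ^ k) * (43 / (Nat.factorial k : ℝ)) :=
          mul_le_mul_of_nonneg_left hdiv (by positivity)
      _ = 43 * σ ^ 4 * ((σ * S) ^ k / (Nat.factorial k : ℝ)) := by
          rw [mul_pow]; ring
  have hnn : ∀ k : ℕ,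
      0 ≤ σ ^ (k + 4) / (Nat.factorial (k + 4) : ℝ) * (Theta1 ξ k + Theta2 ξ k) :=
    fun k => mul_nonneg (by positivity)
      (add_nonneg (theta1_nonneg ξ k) (theta2_nonneg ξ k))
  have hg : Summable fun k : ℕ => 43 * σ ^ 4 * ((σ * S) ^ k / (Nat.factorial k : ℝ)) :=
    (Real.summable_pow_div_factorial (σ * S)).mul_left _
  have hf : Summable fun k : ℕ =>
      σ ^ (k + 4) / (Nat.factorial (k + 4) : ℝ) * (Theta1 ξ k + Theta2 ξ k) :=
    Summable.of_nonneg_of_le hnn hterm hg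
  calc ∑' k : ℕ, σ ^ (k + 4) / (Nat.factorial (k + 4) : ℝ) * (Theta1 ξ k + Theta2 ξ k)
      ≤ ∑' k : ℕ, 43 * σ ^ 4 * ((σ * S) ^ k / (Nat.factorial k : ℝ)) :=
        Summable.tsum_le_tsum hterm hf hg
    _ = 43 * σ ^ 4 * ∑' k : ℕ, (σ * S) ^ k / (Nat.factorial k : ℝ) := tsum_mul_left
    _ = 43 * σ ^ 4 * Real.exp (σ * S) := by
        rw [Real.exp_eq_exp_ℝ, NormedSpace.exp_eq_tsum_div]
end

section
/- There exists a constant C > 0 such that for every σ with 0 < σ ≤ 1 and all real numbers ξ1, ξ2, ξ3 with ξ1 + ξ2 + ξ3 = 0, the quantity β3 := −(1/9) Σ_{k=1}^∞ (σ^{2k}/(2k)!) Σ_{i+j=2k−2} ( ξ3^j ( (−ξ1)^i + (−ξ2)^i ) + ξ1^i (−ξ2)^j ) satisfies |β3| ≤ C · ( 1/(1+|ξ1|) + 1/(1+|ξ2|) + 1/(1+|ξ3|) ) · e^{σ(|ξ1|+|ξ2|+|ξ3|)}. -/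
open Finset

lemma beta3_fact_ineq1 (k : ℕ) :
    (2*(k:ℝ)+1) * (Nat.factorial (2*k)) ≤ (Nat.factorial (2*k+2)) := by
  have h : (2*k+1) * Nat.factorial (2*k) ≤ Nat.factorial (2*k+2) := by
    have h2 : Nat.factorial (2*k+2) = (2*k+2) * ((2*k+1) * Nat.factorial (2*k)) := by
      rw [Nat.factorial_succ, Nat.factorial_succ]
    rw [h2]
    exact Nat.le_mul_of_pos_left _ (by omega)
  calc (2*(k:ℝ)+1) * (Nat.factorial (2*k)) = ((2*k+1 : ℕ) : ℝ) * (Nat.factorial (2*k)) := by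
        push_cast; ring
    _ ≤ (Nat.factorial (2*k+2)) := by exact_mod_cast h

lemma beta3_fact_ineq2 (k : ℕ) :
    (2*(k:ℝ)+1) * (Nat.factorial (2*k+1)) ≤ (Nat.factorial (2*k+2)) := by
  have h : (2*k+1) * Nat.factorial (2*k+1) ≤ Nat.factorial (2*k+2) := by
    rw [Nat.factorial_succ (2*k+1)]
    exact Nat.mul_le_mul_right _ (by omega)
  calc (2*(k:ℝ)+1) * (Nat.factorial (2*k+1)) = ((2*k+1 : ℕ) : ℝ) * (Nat.factorial (2*k+1)) := by
        push_cast; ring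
    _ ≤ (Nat.factorial (2*k+2)) := by exact_mod_cast h

lemma beta3_key_num (σ M : ℝ) (hσ0 : 0 < σ) (hσ1 : σ ≤ 1) (hM : 0 ≤ M) (k : ℕ) :
    σ ^ (2*k+2) / (Nat.factorial (2*k+2) : ℝ) * (3 * (2*(k:ℝ)+1) * M^(2*k)) ≤
      3/(1+M) * ((σ*M)^(2*k)/(Nat.factorial (2*k)) + (σ*M)^(2*k+1)/(Nat.factorial (2*k+1))) := by
  have hM1 : (0:ℝ) < 1 + M := by linarith
  rw [div_mul_eq_mul_div 3, le_div_iff₀ hM1]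
  have hA : σ ^ (2*k+2) / (Nat.factorial (2*k+2) : ℝ) * (3 * (2*(k:ℝ)+1) * M^(2*k))
      ≤ 3 * (σ*M)^(2*k) / (Nat.factorial (2*k)) := by
    rw [div_mul_eq_mul_div, div_le_div_iff₀ (by positivity) (by positivity)]
    have hσp : σ ^ (2*k+2) ≤ σ ^ (2*k) := pow_le_pow_of_le_one hσ0.le hσ1 (by omega)
    calc σ ^ (2*k+2) * (3 * (2*(k:ℝ)+1) * M^(2*k)) * (Nat.factorial (2*k))
        = (3 * M^(2*k)) * (σ ^ (2*k+2) * ((2*(k:ℝ)+1) * (Nat.factorial (2*k)))) := by ring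
      _ ≤ (3 * M^(2*k)) * (σ ^ (2*k) * (Nat.factorial (2*k+2))) := by
          apply mul_le_mul_of_nonneg_left _ (by positivity)
          exact mul_le_mul hσp (beta3_fact_ineq1 k) (by positivity) (by positivity)
      _ = 3 * (σ*M)^(2*k) * (Nat.factorial (2*k+2)) := by rw [mul_pow]; ring
  have hB : σ ^ (2*k+2) / (Nat.factorial (2*k+2) : ℝ) * (3 * (2*(k:ℝ)+1) * M^(2*k)) * M
      ≤ 3 * (σ*M)^(2*k+1) / (Nat.factorial (2*k+1)) := by
    rw [div_mul_eq_mul_div, div_mul_eq_mul_div, div_le_div_iff₀ (by positivity) (by positivity)]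
    have hσp : σ ^ (2*k+2) ≤ σ ^ (2*k+1) := pow_le_pow_of_le_one hσ0.le hσ1 (by omega)
    calc σ ^ (2*k+2) * (3 * (2*(k:ℝ)+1) * M^(2*k)) * M * (Nat.factorial (2*k+1))
        = (3 * M^(2*k+1)) * (σ ^ (2*k+2) * ((2*(k:ℝ)+1) * (Nat.factorial (2*k+1)))) := by
          rw [pow_succ]; ring
      _ ≤ (3 * M^(2*k+1)) * (σ ^ (2*k+1) * (Nat.factorial (2*k+2))) := by
          apply mul_le_mul_of_nonneg_left _ (by positivity)
          exact mul_le_mul hσp (beta3_fact_ineq2 k) (by positivity) (by positivity)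
      _ = 3 * (σ*M)^(2*k+1) * (Nat.factorial (2*k+2)) := by rw [mul_pow]; ring
  calc σ ^ (2*k+2) / (Nat.factorial (2*k+2) : ℝ) * (3 * (2*(k:ℝ)+1) * M^(2*k)) * (1+M)
      = σ ^ (2*k+2) / (Nat.factorial (2*k+2) : ℝ) * (3 * (2*(k:ℝ)+1) * M^(2*k))
        + σ ^ (2*k+2) / (Nat.factorial (2*k+2) : ℝ) * (3 * (2*(k:ℝ)+1) * M^(2*k)) * M := by ring
    _ ≤ 3 * (σ*M)^(2*k) / (Nat.factorial (2*k)) + 3 * (σ*M)^(2*k+1) / (Nat.factorial (2*k+1)) :=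
        add_le_add hA hB
    _ = 3 * ((σ*M)^(2*k)/(Nat.factorial (2*k)) + (σ*M)^(2*k+1)/(Nat.factorial (2*k+1))) := by ring

lemma beta3_inner_bound (ξ1 ξ2 ξ3 M : ℝ) (hM : 0 ≤ M)
    (h1 : |ξ1| ≤ M) (h2 : |ξ2| ≤ M) (h3 : |ξ3| ≤ M) (n : ℕ) :
    |∑ p ∈ antidiagonal n,
        (ξ3 ^ p.2 * ((-ξ1) ^ p.1 + (-ξ2) ^ p.1) + ξ1 ^ p.1 * (-ξ2) ^ p.2)|
      ≤ ((n : ℝ) + 1) * (3 * M ^ n) := by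
  calc |∑ p ∈ antidiagonal n,
          (ξ3 ^ p.2 * ((-ξ1) ^ p.1 + (-ξ2) ^ p.1) + ξ1 ^ p.1 * (-ξ2) ^ p.2)|
      ≤ ∑ p ∈ antidiagonal n,
          |ξ3 ^ p.2 * ((-ξ1) ^ p.1 + (-ξ2) ^ p.1) + ξ1 ^ p.1 * (-ξ2) ^ p.2| :=
        Finset.abs_sum_le_sum_abs _ _
    _ ≤ ∑ _p ∈ antidiagonal n, 3 * M ^ n := by
        apply Finset.sum_le_sum
        intro p hp
        have hpn : p.1 + p.2 = n := Finset.HasAntidiagonal.mem_antidiagonal.mp hp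
        have e1 : |ξ3 ^ p.2 * ((-ξ1) ^ p.1 + (-ξ2) ^ p.1)| ≤ M ^ p.2 * (M ^ p.1 + M ^ p.1) := by
          rw [abs_mul, abs_pow]
          apply mul_le_mul (pow_le_pow_left₀ (abs_nonneg _) h3 _) ?_ (abs_nonneg _)
            (pow_nonneg hM _)
          calc |(-ξ1) ^ p.1 + (-ξ2) ^ p.1| ≤ |(-ξ1) ^ p.1| + |(-ξ2) ^ p.1| := abs_add_le _ _
            _ = |ξ1| ^ p.1 + |ξ2| ^ p.1 := by rw [abs_pow, abs_pow, abs_neg, abs_neg]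
            _ ≤ M ^ p.1 + M ^ p.1 :=
                add_le_add (pow_le_pow_left₀ (abs_nonneg _) h1 _)
                  (pow_le_pow_left₀ (abs_nonneg _) h2 _)
        have e2 : |ξ1 ^ p.1 * (-ξ2) ^ p.2| ≤ M ^ p.1 * M ^ p.2 := by
          rw [abs_mul, abs_pow, abs_pow, abs_neg]
          exact mul_le_mul (pow_le_pow_left₀ (abs_nonneg _) h1 _)
            (pow_le_pow_left₀ (abs_nonneg _) h2 _) (pow_nonneg (abs_nonneg _) _)
            (pow_nonneg hM _)
        calc |ξ3 ^ p.2 * ((-ξ1) ^ p.1 + (-ξ2) ^ p.1) + ξ1 ^ p.1 * (-ξ2) ^ p.2|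
            ≤ |ξ3 ^ p.2 * ((-ξ1) ^ p.1 + (-ξ2) ^ p.1)| + |ξ1 ^ p.1 * (-ξ2) ^ p.2| := abs_add_le _ _
          _ ≤ M ^ p.2 * (M ^ p.1 + M ^ p.1) + M ^ p.1 * M ^ p.2 := add_le_add e1 e2
          _ = 3 * (M ^ p.1 * M ^ p.2) := by ring
          _ = 3 * M ^ n := by rw [← pow_add, hpn]
    _ = ((n : ℝ) + 1) * (3 * M ^ n) := by
        rw [Finset.sum_const, Finset.Nat.card_antidiagonal]
        push_cast; ring

/-- The pointwise bound (4.7) for the multiplier `β3`: there is a constant `C > 0`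
such that for all `0 < σ ≤ 1` and all reals with `ξ1 + ξ2 + ξ3 = 0`, the quantity
`β3 = −(1/9) Σ_{k=1}^∞ (σ^{2k}/(2k)!) Σ_{i+j=2k−2} (ξ3^j ((−ξ1)^i + (−ξ2)^i) + ξ1^i (−ξ2)^j)`
satisfies `|β3| ≤ C (1/(1+|ξ1|) + 1/(1+|ξ2|) + 1/(1+|ξ3|)) e^{σ(|ξ1|+|ξ2|+|ξ3|)}`.
(The series over `k ≥ 1` is written as a `tsum` over `k : ℕ` via `k ↦ k + 1`.) -/
theorem beta3_pointwise_bound :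
    ∃ C : ℝ, 0 < C ∧ ∀ σ : ℝ, 0 < σ → σ ≤ 1 → ∀ ξ1 ξ2 ξ3 : ℝ,
      ξ1 + ξ2 + ξ3 = 0 →
      |(-(1 / 9 : ℝ)) *
          ∑' k : ℕ, σ ^ (2 * (k + 1)) / (Nat.factorial (2 * (k + 1)) : ℝ) *
            ∑ p ∈ antidiagonal (2 * (k + 1) - 2),
              (ξ3 ^ p.2 * ((-ξ1) ^ p.1 + (-ξ2) ^ p.1) + ξ1 ^ p.1 * (-ξ2) ^ p.2)|
        ≤ C * (1 / (1 + |ξ1|) + 1 / (1 + |ξ2|) + 1 / (1 + |ξ3|)) *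
            Real.exp (σ * (|ξ1| + |ξ2| + |ξ3|)) := by
  refine ⟨1, one_pos, fun σ hσ0 hσ1 ξ1 ξ2 ξ3 _ => ?_⟩
  set M : ℝ := max |ξ1| (max |ξ2| |ξ3|) with hMdef
  have h1 : |ξ1| ≤ M := le_max_left _ _
  have h2 : |ξ2| ≤ M := le_trans (le_max_left _ _) (le_max_right _ _)
  have h3 : |ξ3| ≤ M := le_trans (le_max_right _ _) (le_max_right _ _)
  have hM : 0 ≤ M := le_trans (abs_nonneg _) h1
  have hM1 : (0:ℝ) < 1 + M := by linarith
  -- the majorant series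
  have hgsum : HasSum
      (fun k : ℕ => 3/(1+M) *
        ((σ*M)^(2*k)/(Nat.factorial (2*k)) + (σ*M)^(2*k+1)/(Nat.factorial (2*k+1))))
      (3/(1+M) * Real.exp (σ*M)) := by
    have := ((Real.hasSum_cosh (σ*M)).add (Real.hasSum_sinh (σ*M))).mul_left (3/(1+M))
    rwa [Real.cosh_add_sinh] at this
  -- termwise bound
  have hb : ∀ k : ℕ,
      ‖σ ^ (2 * (k + 1)) / (Nat.factorial (2 * (k + 1)) : ℝ) *
          ∑ p ∈ antidiagonal (2 * (k + 1) - 2),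
            (ξ3 ^ p.2 * ((-ξ1) ^ p.1 + (-ξ2) ^ p.1) + ξ1 ^ p.1 * (-ξ2) ^ p.2)‖
        ≤ 3/(1+M) *
            ((σ*M)^(2*k)/(Nat.factorial (2*k)) + (σ*M)^(2*k+1)/(Nat.factorial (2*k+1))) := by
    intro k
    have hk2 : 2 * (k + 1) = 2*k+2 := by ring
    have hk0 : 2 * (k + 1) - 2 = 2*k := by omega
    rw [hk0, hk2, Real.norm_eq_abs, abs_mul,
      abs_of_pos (show (0:ℝ) < σ ^ (2*k+2) / (Nat.factorial (2*k+2) : ℝ) by positivity)]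
    calc σ ^ (2*k+2) / (Nat.factorial (2*k+2) : ℝ) *
          |∑ p ∈ antidiagonal (2*k),
            (ξ3 ^ p.2 * ((-ξ1) ^ p.1 + (-ξ2) ^ p.1) + ξ1 ^ p.1 * (-ξ2) ^ p.2)|
        ≤ σ ^ (2*k+2) / (Nat.factorial (2*k+2) : ℝ) * (3 * (2*(k:ℝ)+1) * M^(2*k)) := by
          apply mul_le_mul_of_nonneg_left _ (by positivity)
          have := beta3_inner_bound ξ1 ξ2 ξ3 M hM h1 h2 h3 (2*k)
          calc |∑ p ∈ antidiagonal (2*k),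
                (ξ3 ^ p.2 * ((-ξ1) ^ p.1 + (-ξ2) ^ p.1) + ξ1 ^ p.1 * (-ξ2) ^ p.2)|
              ≤ (((2*k : ℕ) : ℝ) + 1) * (3 * M ^ (2*k)) := this
            _ = 3 * (2*(k:ℝ)+1) * M^(2*k) := by push_cast; ring
      _ ≤ 3/(1+M) *
            ((σ*M)^(2*k)/(Nat.factorial (2*k)) + (σ*M)^(2*k+1)/(Nat.factorial (2*k+1))) :=
          beta3_key_num σ M hσ0 hσ1 hM k
  have hT : ‖∑' k : ℕ, σ ^ (2 * (k + 1)) / (Nat.factorial (2 * (k + 1)) : ℝ) *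
        ∑ p ∈ antidiagonal (2 * (k + 1) - 2),
          (ξ3 ^ p.2 * ((-ξ1) ^ p.1 + (-ξ2) ^ p.1) + ξ1 ^ p.1 * (-ξ2) ^ p.2)‖
      ≤ 3/(1+M) * Real.exp (σ*M) := tsum_of_norm_bounded hgsum hb
  rw [abs_mul, abs_neg, abs_of_pos (show (0:ℝ) < 1/9 by norm_num)]
  have hexp : Real.exp (σ*M) ≤ Real.exp (σ * (|ξ1| + |ξ2| + |ξ3|)) := by
    apply Real.exp_le_exp.mpr
    apply mul_le_mul_of_nonneg_left _ hσ0.le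
    exact max_le (by linarith [abs_nonneg ξ2, abs_nonneg ξ3])
      (max_le (by linarith [abs_nonneg ξ1, abs_nonneg ξ3])
        (by linarith [abs_nonneg ξ1, abs_nonneg ξ2]))
  have hr1 : 1/(1+M) ≤ 1/(1+|ξ1|) :=
    one_div_le_one_div_of_le (by positivity) (by linarith)
  have hr2 : (0:ℝ) ≤ 1/(1+|ξ2|) := by positivity
  have hr3 : (0:ℝ) ≤ 1/(1+|ξ3|) := by positivity
  calc (1/9 : ℝ) * |∑' k : ℕ, σ ^ (2 * (k + 1)) / (Nat.factorial (2 * (k + 1)) : ℝ) *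
          ∑ p ∈ antidiagonal (2 * (k + 1) - 2),
            (ξ3 ^ p.2 * ((-ξ1) ^ p.1 + (-ξ2) ^ p.1) + ξ1 ^ p.1 * (-ξ2) ^ p.2)|
      ≤ (1/9) * (3/(1+M) * Real.exp (σ*M)) := by
        apply mul_le_mul_of_nonneg_left _ (by norm_num)
        exact hT
    _ = ((1/3) * (1/(1+M))) * Real.exp (σ*M) := by ring
    _ ≤ (1 * (1 / (1 + |ξ1|) + 1 / (1 + |ξ2|) + 1 / (1 + |ξ3|))) *
          Real.exp (σ * (|ξ1| + |ξ2| + |ξ3|)) := by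
        apply mul_le_mul _ hexp (Real.exp_pos _).le
        · have h0 : (0:ℝ) ≤ 1/(1+M) := by positivity
          linarith
        · have h0 : (0:ℝ) < 1/(1+|ξ1|) := by positivity
          nlinarith
    _ = 1 * (1 / (1 + |ξ1|) + 1 / (1 + |ξ2|) + 1 / (1 + |ξ3|)) *
          Real.exp (σ * (|ξ1| + |ξ2| + |ξ3|)) := by ring
end
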